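/- arXiv:1104.3824 — 5 statements merged into one kernel-verified Lean document; each statement's English description precedes it below -/
import Mathlib

section
/- For any field k, the set of (images in A_k of) words in the letters x_1, …, x_7 that contain none of x_7x_6, x_7x_5, x_7x_4, x_7x_3, x_7x_2, x_7x_1, x_6x_1 as a subword forms a k-vector-space basis of A_k. -/
/-!
Each bad pair `x_a x_b` lies on exactly one Fano line `ℓ`, where `ε^{ℓab} = ±1`, so `r_ℓ` can be
solved for `x_a x_b`; all other monomials of `r_ℓ` are lexicographically smaller, so this is a
terminating quadratic rewriting system whose irreducible words are the good words, and termination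
alone shows that the good words span. For independence (Bergman's diamond lemma) the only overlap
ambiguity, `x_7 x_6 x_1`, resolves. Hence reduction to normal form is a well defined map on the
free module on all words, left multiplication by `x_i` followed by reduction satisfies the
relations, and in the resulting representation of `A_k` a good word sends the empty word to itself.
-/

/- The Fano-plane structure constants ε^{ijk}.  Indices `0,…,6` correspond to labels `1,…,7`,
so the directed lines 123, 145, 167, 246, 275, 374, 365 become the triples below. -/
def fanoTriples : List (Fin 7 × Fin 7 × Fin 7) :=
  [(0, 1, 2), (0, 3, 4), (0, 5, 6), (1, 3, 5), (1, 6, 4), (2, 6, 3), (2, 5, 4)]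

/-- All cyclic permutations of the directed Fano lines. -/
def fanoPlus : List (Fin 7 × Fin 7 × Fin 7) :=
  fanoTriples.flatMap fun t => [(t.1, t.2.1, t.2.2), (t.2.1, t.2.2, t.1), (t.2.2, t.1, t.2.1)]

/-- The totally antisymmetric symbol `ε^{ijk}`. -/
def eps (i j k : Fin 7) : ℤ :=
  if (i, j, k) ∈ fanoPlus then 1 else if (j, i, k) ∈ fanoPlus then -1 else 0

/-- The defining relation `r_ℓ = Σ_{m,n} ε^{ℓmn} x_m x_n` in the free algebra on `x_1,…,x_7`. -/
noncomputable def relElem (k : Type*) [Field k] (ℓ : Fin 7) : FreeAlgebra k (Fin 7) :=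
  ∑ m : Fin 7, ∑ n : Fin 7, eps ℓ m n • (FreeAlgebra.ι k m * FreeAlgebra.ι k n)

/-- The relation identifying each `r_ℓ` with `0`; quotienting by it imposes the two-sided
ideal generated by `r_1, …, r_7`. -/
inductive Arel (k : Type*) [Field k] : FreeAlgebra k (Fin 7) → FreeAlgebra k (Fin 7) → Prop
  | mk (ℓ : Fin 7) : Arel k (relElem k ℓ) 0

/-- The algebra `A_k = k⟨x_1,…,x_7⟩/(r_1,…,r_7)`. -/
abbrev SmithA (k : Type*) [Field k] : Type _ := RingQuot (Arel k)

/-- The images of the generators `x_i` in `A_k`. -/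
noncomputable def xg (k : Type*) [Field k] (i : Fin 7) : SmithA k :=
  RingQuot.mkAlgHom k (Arel k) (FreeAlgebra.ι k i)

/-- The forbidden subwords `x_7x_6, x_7x_5, x_7x_4, x_7x_3, x_7x_2, x_7x_1, x_6x_1`
(recall index `i : Fin 7` stands for the generator `x_{i+1}`). -/
def badPairs : List (Fin 7 × Fin 7) :=
  [(6, 5), (6, 4), (6, 3), (6, 2), (6, 1), (6, 0), (5, 0)]

/-- A word in `x_1,…,x_7` is good if it contains none of the seven bad subwords. -/
def GoodWord (w : List (Fin 7)) : Prop :=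
  List.Chain' (fun a b => (a, b) ∉ badPairs) w

universe u

theorem Fintype.sum_sum_zsmul_congr {α β M : Type*} [Fintype α] [Fintype β] [AddCommGroup M]
    (κ : α → β → ℤ) {f g : α → β → M} (h : ∀ a b, κ a b ≠ 0 → f a b = g a b) :
    ∑ a, ∑ b, κ a b • f a b = ∑ a, ∑ b, κ a b • g a b := by
  refine Finset.sum_congr rfl fun a _ => Finset.sum_congr rfl fun b _ => ?_
  by_cases hab : κ a b = 0
  · simp [hab]
  · rw [h a b hab]

theorem Algebra.span_range_prod_map_eq_top {R A ι : Type*} [CommSemiring R] [Semiring A]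
    [Algebra R A] {y : ι → A} (h : Algebra.adjoin R (Set.range y) = ⊤) :
    Submodule.span R (Set.range fun w : List ι => (w.map y).prod) = ⊤ := by
  have hclosure : (Submonoid.closure (Set.range y) : Set A) =
      Set.range fun w : List ι => (w.map y).prod := by
    rw [Submonoid.closure_eq_image_prod, ← Set.range_list_map, ← Set.range_comp]
    rfl
  rw [← hclosure, ← Algebra.adjoin_eq_span, h, Algebra.top_toSubmodule]

/-- Words of equal length compare lexicographically, read as base-`n` numerals. -/
def wordWeight {n : ℕ} (w : List (Fin n)) : ℕ :=
  w.foldl (fun (acc : ℕ) (d : Fin n) => n * acc + d.val) 0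

theorem wordWeight_lt_of_lt {n : ℕ} {a b c d : Fin n} (h : toLex (c, d) < toLex (a, b))
    (u : List (Fin n)) {v v' : List (Fin n)} (hv : v.length = v'.length) :
    wordWeight (u ++ c :: d :: v) < wordWeight (u ++ a :: b :: v') := by
  have foldl_lt : ∀ {x y : ℕ}, x < y → ∀ {s t : List (Fin n)}, s.length = t.length →
      s.foldl (fun (acc : ℕ) (d : Fin n) => n * acc + d.val) x <
        t.foldl (fun (acc : ℕ) (d : Fin n) => n * acc + d.val) y := by
    intro x y hxy s
    induction s generalizing x y with
    | nil => intro t ht; cases t <;> simp_all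
    | cons e s ih =>
      rintro (_ | ⟨e', t⟩) ht
      · simp at ht
      · simp only [List.foldl_cons]
        refine ih ?_ (by simpa using ht)
        have := e.isLt
        have : n * x + n ≤ n * y := by rw [← mul_add_one]; exact Nat.mul_le_mul_left _ hxy
        omega
  simp only [wordWeight, List.foldl_append, List.foldl_cons]
  refine foldl_lt ?_ hv
  generalize List.foldl _ 0 u = A
  obtain hca | ⟨hca, hdb⟩ := Prod.Lex.toLex_lt_toLex.1 h <;> dsimp only at *
  · have := d.isLt
    have : n * (n * A + c) + n ≤ n * (n * A + a) := by
      rw [← mul_add_one]; exact Nat.mul_le_mul_left _ (by omega)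
    omega
  · rw [hca]; omega

/-- The rules `x_a x_b ↦ ∑ coeff a b c d • x_c x_d` for `(a, b) ∈ leading`. -/
structure QuadraticRewritingSystem (n : ℕ) where
  leading : List (Fin n × Fin n)
  coeff : Fin n → Fin n → Fin n → Fin n → ℤ
  lt_of_coeff_ne_zero : ∀ a b c d, (a, b) ∈ leading → coeff a b c d ≠ 0 →
    toLex (c, d) < toLex (a, b)

namespace QuadraticRewritingSystem

variable {n : ℕ} (S : QuadraticRewritingSystem n)

def IsNormal (w : List (Fin n)) : Prop :=
  List.IsChain (fun a b => (a, b) ∉ S.leading) w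

structure Redex (w : List (Fin n)) where
  pre : List (Fin n)
  a : Fin n
  b : Fin n
  post : List (Fin n)
  eq : w = pre ++ a :: b :: post
  mem : (a, b) ∈ S.leading

theorem isNormal_iff_isEmpty_redex {w : List (Fin n)} :
    S.IsNormal w ↔ IsEmpty (S.Redex w) := by
  rw [IsNormal, List.isChain_iff_forall_rel_of_append_cons_cons]
  exact ⟨fun h => ⟨fun r => h r.eq r.mem⟩, fun ⟨h⟩ a b u v hw hab => h ⟨u, a, b, v, hw, hab⟩⟩

theorem nonempty_redex_of_not_isNormal {w : List (Fin n)} (hw : ¬S.IsNormal w) :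
    Nonempty (S.Redex w) :=
  not_isEmpty_iff.1 (mt S.isNormal_iff_isEmpty_redex.2 hw)

/-- Bergman's condition that the ambiguities `x_a x_b x_c` are resolvable: every function on words
of length three that respects all rewritings of words with a smaller leading pair identifies the
two ways of rewriting `x_a x_b x_c`. -/
def OverlapsResolve : Prop :=
  ∀ ⦃a b c : Fin n⦄, (a, b) ∈ S.leading → (b, c) ∈ S.leading →
    ∀ (M : Type u) [AddCommGroup M] (φ : Fin n → Fin n → Fin n → M),
      (∀ p q r, toLex (p, q) < toLex (a, b) →
        ((p, q) ∈ S.leading → φ p q r = ∑ c', ∑ d', S.coeff p q c' d' • φ c' d' r) ∧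
        ((q, r) ∈ S.leading → φ p q r = ∑ c', ∑ d', S.coeff q r c' d' • φ p c' d')) →
      ∑ c', ∑ d', S.coeff a b c' d' • φ c' d' c = ∑ c', ∑ d', S.coeff b c c' d' • φ a c' d'

section Confluence

variable {M : Type u} [AddCommGroup M]

def RespectsRulesAt (f : List (Fin n) → M) (w : List (Fin n)) : Prop :=
  ∀ u a b v, w = u ++ a :: b :: v → (a, b) ∈ S.leading →
    f w = ∑ c, ∑ d, S.coeff a b c d • f (u ++ c :: d :: v)

variable {S} {f : List (Fin n) → M}

theorem sum_coeff_smul_eq_of_disjoint {u z v : List (Fin n)} {a b a' b' : Fin n}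
    (hf : ∀ w, wordWeight w < wordWeight (u ++ a :: b :: (z ++ a' :: b' :: v)) →
      S.RespectsRulesAt f w)
    (hab : (a, b) ∈ S.leading) (hab' : (a', b') ∈ S.leading) :
    ∑ c, ∑ d, S.coeff a b c d • f (u ++ c :: d :: (z ++ a' :: b' :: v)) =
      ∑ c, ∑ d, S.coeff a' b' c d • f ((u ++ a :: b :: z) ++ c :: d :: v) := by
  have hw : u ++ a :: b :: (z ++ a' :: b' :: v) = (u ++ a :: b :: z) ++ a' :: b' :: v := by simp
  have rewrite_right : ∀ c d, S.coeff a b c d ≠ 0 → f (u ++ c :: d :: (z ++ a' :: b' :: v)) =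
      ∑ c', ∑ d', S.coeff a' b' c' d' • f (u ++ c :: d :: (z ++ c' :: d' :: v)) :=
    fun c d hcd => by
      have := hf _ (wordWeight_lt_of_lt (S.lt_of_coeff_ne_zero _ _ _ _ hab hcd) u rfl)
        (u ++ c :: d :: z) a' b' v (by simp) hab'
      simpa using this
  have rewrite_left : ∀ c' d', S.coeff a' b' c' d' ≠ 0 →
      f ((u ++ a :: b :: z) ++ c' :: d' :: v) =
        ∑ c, ∑ d, S.coeff a b c d • f (u ++ c :: d :: (z ++ c' :: d' :: v)) :=
    fun c' d' hcd => by
      have := hf _ (hw ▸ wordWeight_lt_of_lt (S.lt_of_coeff_ne_zero _ _ _ _ hab' hcd) _ rfl)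
        u a b (z ++ c' :: d' :: v) (by simp) hab
      simpa using this
  rw [Fintype.sum_sum_zsmul_congr _ rewrite_right, Fintype.sum_sum_zsmul_congr _ rewrite_left]
  simp only [Finset.smul_sum, ← Fintype.sum_prod_type']
  exact Fintype.sum_equiv ((Equiv.prodAssoc _ _ _).symm.trans
    ((Equiv.prodComm _ _).trans (Equiv.prodAssoc _ _ _))) _ _ fun _ => smul_comm _ _ _

theorem sum_coeff_smul_eq_of_overlap (hS : S.OverlapsResolve.{u}) {u v : List (Fin n)}
    {a b c : Fin n}
    (hf : ∀ w, wordWeight w < wordWeight (u ++ a :: b :: c :: v) → S.RespectsRulesAt f w)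
    (hab : (a, b) ∈ S.leading) (hbc : (b, c) ∈ S.leading) :
    ∑ c', ∑ d', S.coeff a b c' d' • f (u ++ c' :: d' :: c :: v) =
      ∑ c', ∑ d', S.coeff b c c' d' • f ((u ++ [a]) ++ c' :: d' :: v) := by
  simp only [List.append_assoc, List.cons_append, List.nil_append]
  refine hS hab hbc M (fun p q r => f (u ++ p :: q :: r :: v)) fun p q r hpq => ?_
  have hlt := wordWeight_lt_of_lt hpq u (v := r :: v) (v' := c :: v) rfl
  refine ⟨hf _ hlt u p q (r :: v) rfl, fun hqr => ?_⟩
  have := hf _ hlt (u ++ [p]) q r v (by simp) hqr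
  simpa only [List.append_assoc, List.cons_append, List.nil_append] using this

theorem sum_coeff_smul_eq_of_redex (hS : S.OverlapsResolve.{u}) {w : List (Fin n)}
    (hf : ∀ w', wordWeight w' < wordWeight w → S.RespectsRulesAt f w') (r r' : S.Redex w) :
    ∑ c, ∑ d, S.coeff r.a r.b c d • f (r.pre ++ c :: d :: r.post) =
      ∑ c, ∑ d, S.coeff r'.a r'.b c d • f (r'.pre ++ c :: d :: r'.post) := by
  wlog h : ∃ z, r'.pre = r.pre ++ z ∧ r.a :: r.b :: r.post = z ++ r'.a :: r'.b :: r'.post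
    generalizing r r'
  · obtain h' | ⟨z, hz⟩ := List.append_eq_append_iff.1 (r.eq.symm.trans r'.eq)
    · exact absurd h' h
    · exact (this r' r ⟨z, hz⟩).symm
  obtain ⟨z, hpre, htail⟩ := h
  obtain ⟨u, a, b, v, rfl, hab⟩ := r
  obtain ⟨u', a', b', v', _, hab'⟩ := r'
  dsimp only at hpre htail ⊢
  subst hpre
  obtain _ | ⟨x, _ | ⟨y, z⟩⟩ := z
  · simp only [List.nil_append, List.cons.injEq] at htail
    obtain ⟨rfl, rfl, rfl⟩ := htail
    simp only [List.append_nil]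
  · simp only [List.singleton_append, List.cons.injEq] at htail
    obtain ⟨rfl, rfl, rfl⟩ := htail
    exact sum_coeff_smul_eq_of_overlap hS hf hab hab'
  · simp only [List.cons_append, List.cons.injEq] at htail
    obtain ⟨rfl, rfl, rfl⟩ := htail
    exact sum_coeff_smul_eq_of_disjoint hf hab hab'

end Confluence

section Reduction

variable (k : Type u) [CommRing k]

open scoped Classical in
/-- Reduction to normal form, rewriting at an arbitrarily chosen redex (once the overlaps resolve,
every redex gives the same result: `red_eq_sum`). -/
noncomputable def red (w : List (Fin n)) : List (Fin n) →₀ k :=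
  if h : Nonempty (S.Redex w) then
    ∑ c, ∑ d, if _ : S.coeff h.some.a h.some.b c d = 0 then 0
      else S.coeff h.some.a h.some.b c d • red (h.some.pre ++ c :: d :: h.some.post)
  else Finsupp.single w 1
termination_by wordWeight w
decreasing_by
  have := wordWeight_lt_of_lt (S.lt_of_coeff_ne_zero _ _ _ _ h.some.mem ‹_›) h.some.pre
    (v' := h.some.post) rfl
  rwa [← h.some.eq] at this

noncomputable def leftMul (i : Fin n) : Module.End k (List (Fin n) →₀ k) :=
  Finsupp.lift _ k _ fun w => S.red k (i :: w)

variable {S k}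

theorem red_of_isNormal {w : List (Fin n)} (hw : S.IsNormal w) :
    S.red k w = Finsupp.single w 1 := by
  rw [red, dif_neg (not_nonempty_iff.2 (S.isNormal_iff_isEmpty_redex.1 hw))]

theorem exists_red_eq_sum {w : List (Fin n)} (hw : Nonempty (S.Redex w)) : ∃ r : S.Redex w,
    S.red k w = ∑ c, ∑ d, S.coeff r.a r.b c d • S.red k (r.pre ++ c :: d :: r.post) := by
  refine ⟨hw.some, ?_⟩
  rw [red, dif_pos hw]
  refine Finset.sum_congr rfl fun c _ => Finset.sum_congr rfl fun d _ => ?_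
  split_ifs with hc
  · rw [hc, zero_smul]
  · rfl

theorem red_respectsRulesAt (hS : S.OverlapsResolve.{u}) (w : List (Fin n)) :
    S.RespectsRulesAt (S.red k) w := by
  induction hN : wordWeight w using Nat.strong_induction_on generalizing w with
  | _ N ih =>
    intro u a b v hw hab
    let r : S.Redex w := ⟨u, a, b, v, hw, hab⟩
    obtain ⟨r', hr'⟩ := exists_red_eq_sum (k := k) ⟨r⟩
    rw [hr']
    exact sum_coeff_smul_eq_of_redex hS (fun w' hw' => ih _ (hN ▸ hw') w' rfl) r' r

theorem red_eq_sum (hS : S.OverlapsResolve.{u}) (u v : List (Fin n)) {a b : Fin n}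
    (hab : (a, b) ∈ S.leading) :
    S.red k (u ++ a :: b :: v) = ∑ c, ∑ d, S.coeff a b c d • S.red k (u ++ c :: d :: v) :=
  red_respectsRulesAt hS _ u a b v rfl hab

theorem leftMul_single (i : Fin n) (w : List (Fin n)) :
    S.leftMul k i (Finsupp.single w 1) = S.red k (i :: w) := by
  simp [leftMul]

theorem leftMul_red (hS : S.OverlapsResolve.{u}) (i : Fin n) (w : List (Fin n)) :
    S.leftMul k i (S.red k w) = S.red k (i :: w) := by
  induction hN : wordWeight w using Nat.strong_induction_on generalizing w with
  | _ N ih =>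
    by_cases hw : S.IsNormal w
    · rw [red_of_isNormal hw, leftMul_single]
    obtain ⟨⟨u, a, b, v, rfl, hab⟩, hr⟩ :=
      exists_red_eq_sum (k := k) (S.nonempty_redex_of_not_isNormal hw)
    have hstep : ∀ c d, S.coeff a b c d ≠ 0 →
        S.leftMul k i (S.red k (u ++ c :: d :: v)) = S.red k ((i :: u) ++ c :: d :: v) :=
      fun c d hcd =>
        ih _ (hN ▸ wordWeight_lt_of_lt (S.lt_of_coeff_ne_zero _ _ _ _ hab hcd) _ rfl) _ rfl
    simp only [hr, map_sum, map_zsmul]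
    rw [Fintype.sum_sum_zsmul_congr _ hstep, ← red_eq_sum hS _ _ hab, List.cons_append]

theorem leftMul_mul_leftMul (hS : S.OverlapsResolve.{u}) {a b : Fin n}
    (hab : (a, b) ∈ S.leading) :
    S.leftMul k a * S.leftMul k b =
      ∑ c, ∑ d, S.coeff a b c d • (S.leftMul k c * S.leftMul k d) := by
  refine Finsupp.lhom_ext' fun w => LinearMap.ext_ring ?_
  simp only [LinearMap.comp_apply, Finsupp.lsingle_apply, Module.End.mul_apply,
    LinearMap.sum_apply, LinearMap.smul_apply, leftMul_single, leftMul_red hS]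
  exact red_eq_sum hS [] w hab

theorem prod_leftMul_single_nil (hS : S.OverlapsResolve.{u}) (w : List (Fin n)) :
    (w.map (S.leftMul k)).prod (Finsupp.single [] 1) = S.red k w := by
  induction w with
  | nil => exact (red_of_isNormal List.isChain_nil).symm
  | cons i w ih => rw [List.map_cons, List.prod_cons, Module.End.mul_apply, ih, leftMul_red hS]

end Reduction

section Algebra

variable {S} {k : Type u} [CommRing k] {A : Type*} [Ring A] [Algebra k A] {y : Fin n → A}

theorem linearIndependent_prod_map (hS : S.OverlapsResolve.{u})
    (Φ : A →ₐ[k] Module.End k (List (Fin n) →₀ k)) (hΦ : ∀ i, Φ (y i) = S.leftMul k i) :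
    LinearIndependent k fun w : {w // S.IsNormal w} => (w.1.map y).prod := by
  refine LinearIndependent.of_comp
    ((LinearMap.applyₗ (Finsupp.single [] 1)).comp Φ.toLinearMap) ?_
  have hw : ∀ w : {w // S.IsNormal w},
      Φ (w.1.map y).prod (Finsupp.single [] 1) = Finsupp.single w.1 (1 : k) := fun w => by
    rw [map_list_prod, List.map_map, show Φ ∘ y = S.leftMul k from funext hΦ,
      prod_leftMul_single_nil hS, red_of_isNormal w.2]
  convert (Finsupp.linearIndependent_single_one k (List (Fin n))).comp _ Subtype.val_injective
  exact funext hw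

theorem prod_map_eq_sum
    (hy : ∀ a b, (a, b) ∈ S.leading → y a * y b = ∑ c, ∑ d, S.coeff a b c d • (y c * y d))
    (u v : List (Fin n)) {a b : Fin n} (hab : (a, b) ∈ S.leading) :
    ((u ++ a :: b :: v).map y).prod =
      ∑ c, ∑ d, S.coeff a b c d • ((u ++ c :: d :: v).map y).prod := by
  simp only [List.map_append, List.map_cons, List.prod_append, List.prod_cons]
  rw [← mul_assoc (y a), hy a b hab]
  simp only [Finset.sum_mul, Finset.mul_sum, smul_mul_assoc, mul_smul_comm, mul_assoc]

theorem prod_map_mem_span_normal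
    (hy : ∀ a b, (a, b) ∈ S.leading → y a * y b = ∑ c, ∑ d, S.coeff a b c d • (y c * y d))
    (w : List (Fin n)) :
    (w.map y).prod ∈
      Submodule.span k (Set.range fun w : {w // S.IsNormal w} => (w.1.map y).prod) := by
  induction hN : wordWeight w using Nat.strong_induction_on generalizing w with
  | _ N ih =>
    by_cases hw : S.IsNormal w
    · exact Submodule.subset_span ⟨⟨w, hw⟩, rfl⟩
    obtain ⟨⟨u, a, b, v, rfl, hab⟩⟩ := S.nonempty_redex_of_not_isNormal hw
    rw [prod_map_eq_sum hy u v hab]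
    refine Submodule.sum_mem _ fun c _ => Submodule.sum_mem _ fun d _ => ?_
    by_cases hcd : S.coeff a b c d = 0
    · rw [hcd, zero_smul]
      exact Submodule.zero_mem _
    · exact Submodule.smul_of_tower_mem _ _
        (ih _ (hN ▸ wordWeight_lt_of_lt (S.lt_of_coeff_ne_zero _ _ _ _ hab hcd) _ rfl) _ rfl)

end Algebra

end QuadraticRewritingSystem

/-- With `ε` the `7 × 49` matrix `(ε^{ℓmn})`, this is the matrix `1 - εᵀε`. For a bad pair `(a, b)`
lying on the line `ℓ`, `x_a x_b - ∑ rewriteCoeff a b c d • x_c x_d = ε^{ℓab} r_ℓ`. -/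
def rewriteCoeff (a b c d : Fin 7) : ℤ :=
  (if (c, d) = (a, b) then 1 else 0) - ∑ ℓ, eps ℓ a b * eps ℓ c d

def smithRewriting : QuadraticRewritingSystem 7 where
  leading := badPairs
  coeff := rewriteCoeff
  lt_of_coeff_ne_zero := by decide

section Relations

variable {M : Type*} [AddCommGroup M]

theorem sum_rewriteCoeff_smul (g : Fin 7 → Fin 7 → M) (a b : Fin 7) :
    ∑ c, ∑ d, rewriteCoeff a b c d • g c d =
      g a b - ∑ ℓ, eps ℓ a b • ∑ c, ∑ d, eps ℓ c d • g c d := by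
  simp only [rewriteCoeff, sub_smul, Finset.sum_sub_distrib, ite_smul, one_smul, zero_smul,
    Finset.sum_smul, mul_smul, Finset.smul_sum, Prod.mk.injEq, ite_and, Finset.sum_ite_irrel,
    Finset.sum_ite_eq', Finset.mem_univ, if_true, Finset.sum_const_zero]
  conv_rhs => rw [Finset.sum_comm]
  exact congrArg _ (Finset.sum_congr rfl fun c _ => Finset.sum_comm)

theorem eq_sum_rewriteCoeff_smul {g : Fin 7 → Fin 7 → M}
    (h : ∀ ℓ, ∑ c, ∑ d, eps ℓ c d • g c d = 0) (a b : Fin 7) :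
    g a b = ∑ c, ∑ d, rewriteCoeff a b c d • g c d := by
  simp [sum_rewriteCoeff_smul, h]

theorem exists_badPair_eps (ℓ : Fin 7) : ∃ a b, (a, b) ∈ badPairs ∧ eps ℓ a b * eps ℓ a b = 1 ∧
    ∀ ℓ', ℓ' ≠ ℓ → eps ℓ' a b = 0 := by
  revert ℓ
  decide

theorem sum_eps_smul_eq_zero {g : Fin 7 → Fin 7 → M}
    (h : ∀ a b, (a, b) ∈ badPairs → g a b = ∑ c, ∑ d, rewriteCoeff a b c d • g c d)
    (ℓ : Fin 7) : ∑ c, ∑ d, eps ℓ c d • g c d = 0 := by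
  obtain ⟨a, b, hab, hunit, hline⟩ := exists_badPair_eps ℓ
  have hrel := h a b hab
  rw [sum_rewriteCoeff_smul, Finset.sum_eq_single ℓ (fun ℓ' _ h' => by rw [hline ℓ' h', zero_smul])
    (by simp), eq_comm, sub_eq_self] at hrel
  rw [← one_smul ℤ (∑ c, ∑ d, eps ℓ c d • g c d), ← hunit, mul_smul, hrel, smul_zero]

end Relations

theorem smithRewriting_overlapsResolve : smithRewriting.OverlapsResolve.{u} := by
  intro a b c hab hbc M _ φ hφ
  have overlap : ∀ a b c : Fin 7, (a, b) ∈ badPairs → (b, c) ∈ badPairs →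
      a = 6 ∧ b = 5 ∧ c = 0 := by
    decide
  obtain ⟨rfl, rfl, rfl⟩ := overlap a b c hab hbc
  -- the rewrites met while reducing `x_7 x_6 x_1` in both ways
  have h1 := (hφ 5 6 0 (by decide)).2 (by decide)
  have h2 := (hφ 5 0 6 (by decide)).1 (by decide)
  have h3 := (hφ 6 4 1 (by decide)).1 (by decide)
  have h4 := (hφ 6 3 2 (by decide)).1 (by decide)
  have h5 := (hφ 6 2 3 (by decide)).1 (by decide)
  have h6 := (hφ 6 1 4 (by decide)).1 (by decide)
  have h7 := (hφ 6 0 5 (by decide)).1 (by decide)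
  have h8 := (hφ 4 6 1 (by decide)).2 (by decide)
  have h9 := (hφ 3 6 2 (by decide)).2 (by decide)
  have h10 := (hφ 2 6 3 (by decide)).2 (by decide)
  have h11 := (hφ 1 6 4 (by decide)).2 (by decide)
  have h12 := (hφ 0 6 5 (by decide)).2 (by decide)
  simp +decide only [smithRewriting, rewriteCoeff, eps, Fin.sum_univ_seven, zero_smul, one_smul,
    neg_smul, add_zero, zero_add, Int.reduceNeg, Int.reduceMul, Int.reduceSub, ↓reduceIte]
    at h1 h2 h3 h4 h5 h6 h7 h8 h9 h10 h11 h12 ⊢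
  rw [h1, h2, h3, h4, h5, h6, h7, h8, h9, h10, h11, h12]
  abel

section SmithA

variable (k : Type u) [Field k]

theorem xg_mul_xg (a b : Fin 7) :
    xg k a * xg k b = ∑ c, ∑ d, rewriteCoeff a b c d • (xg k c * xg k d) := by
  refine eq_sum_rewriteCoeff_smul (g := fun m n => xg k m * xg k n) (fun ℓ => ?_) a b
  have h := RingQuot.mkAlgHom_rel k (Arel.mk (k := k) ℓ)
  simp only [relElem, map_sum, map_zsmul, map_mul, map_zero] at h
  exact h

theorem adjoin_range_xg : Algebra.adjoin k (Set.range (xg k)) = ⊤ := by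
  rw [show xg k = RingQuot.mkAlgHom k (Arel k) ∘ FreeAlgebra.ι k from rfl, Set.range_comp,
    Algebra.adjoin_image, FreeAlgebra.adjoin_range_ι, Algebra.map_top,
    (AlgHom.range_eq_top _).2 (RingQuot.mkAlgHom_surjective k (Arel k))]

theorem sum_eps_smul_leftMul_mul_leftMul (ℓ : Fin 7) :
    ∑ m, ∑ n, eps ℓ m n • (smithRewriting.leftMul k m * smithRewriting.leftMul k n) = 0 := by
  refine sum_eps_smul_eq_zero
    (g := fun m n => smithRewriting.leftMul k m * smithRewriting.leftMul k n) (fun a b hab => ?_) ℓ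
  exact smithRewriting.leftMul_mul_leftMul (k := k) smithRewriting_overlapsResolve hab

noncomputable def smithA_toEnd : SmithA k →ₐ[k] Module.End k (List (Fin 7) →₀ k) :=
  RingQuot.liftAlgHom k ⟨FreeAlgebra.lift k (smithRewriting.leftMul k), fun _ _ ⟨ℓ⟩ => by
    simp only [relElem, map_sum, map_zsmul, map_mul, FreeAlgebra.lift_ι_apply, map_zero]
    exact sum_eps_smul_leftMul_mul_leftMul k ℓ⟩

theorem smithA_toEnd_xg (i : Fin 7) : smithA_toEnd k (xg k i) = smithRewriting.leftMul k i := by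
  rw [xg, smithA_toEnd, RingQuot.liftAlgHom_mkAlgHom_apply, FreeAlgebra.lift_ι_apply]

end SmithA

/-- the images in `A_k` of the words in `x_1,…,x_7` containing none of
`x_7x_6, x_7x_5, x_7x_4, x_7x_3, x_7x_2, x_7x_1, x_6x_1` as a subword form a `k`-vector
space basis of `A_k`. -/
theorem SmithA_goodWord_basis (k : Type*) [Field k] :
    LinearIndependent k (fun w : {w : List (Fin 7) // GoodWord w} =>
        ((w : List (Fin 7)).map (xg k)).prod) ∧
      Submodule.span k
        (Set.range (fun w : {w : List (Fin 7) // GoodWord w} =>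
          ((w : List (Fin 7)).map (xg k)).prod)) = ⊤ := by
  refine ⟨smithRewriting.linearIndependent_prod_map smithRewriting_overlapsResolve
    (smithA_toEnd k) (smithA_toEnd_xg k), ?_⟩
  rw [eq_top_iff, ← Algebra.span_range_prod_map_eq_top (adjoin_range_xg k), Submodule.span_le]
  rintro _ ⟨w, rfl⟩
  exact smithRewriting.prod_map_mem_span_normal (fun a b _ => xg_mul_xg k a b) w
end

section
/- Let k be a field, V the 7-dimensional k-vector space with basis x_1,…,x_7, and R ⊆ V ⊗ V the 7-dimensional subspace spanned by the elements r_ℓ = Σ_{m,n=1}^7 ε^{ℓmn} x_m ⊗ x_n (ℓ = 1,…,7). Then the intersection (V ⊗ R) ∩ (R ⊗ V) inside V ⊗ V ⊗ V is one-dimensional, spanned by W = Σ_{i,j,k=1}^7 ε^{ijk} x_i ⊗ x_j ⊗ x_k; moreover W = Σ_{i=1}^7 x_i ⊗ r_i = Σ_{i=1}^7 r_i ⊗ x_i. -/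
open TensorProduct

/-- The 7-dimensional vector space `V` with basis `x_1, …, x_7`. -/
abbrev V7 (k : Type) [Field k] : Type := Fin 7 → k

/-- The basis vectors `x_i` of `V`. -/
noncomputable def xv (k : Type) [Field k] (i : Fin 7) : V7 k := Pi.single i 1

/-- The relation tensors `r_ℓ = Σ_{m,n} ε^{ℓmn} x_m ⊗ x_n ∈ V ⊗ V`. -/
noncomputable def rT (k : Type) [Field k] (ℓ : Fin 7) : V7 k ⊗[k] V7 k :=
  ∑ m : Fin 7, ∑ n : Fin 7, ((eps ℓ m n : ℤ) : k) • (xv k m ⊗ₜ[k] xv k n)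

/-- The 7-dimensional space of relations `R = span{r_1,…,r_7} ⊆ V ⊗ V`. -/
noncomputable def RT (k : Type) [Field k] : Submodule k (V7 k ⊗[k] V7 k) :=
  Submodule.span k (Set.range (rT k))

/-- The superpotential `W = Σ_{i,j,l} ε^{ijl} x_i ⊗ x_j ⊗ x_l ∈ V ⊗ V ⊗ V`. -/
noncomputable def WT (k : Type) [Field k] : V7 k ⊗[k] (V7 k ⊗[k] V7 k) :=
  ∑ i : Fin 7, ∑ j : Fin 7, ∑ l : Fin 7,
    ((eps i j l : ℤ) : k) • (xv k i ⊗ₜ[k] (xv k j ⊗ₜ[k] xv k l))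

/-- The subspace `V ⊗ R` of `V ⊗ V ⊗ V`. -/
noncomputable def VtensR (k : Type) [Field k] : Submodule k (V7 k ⊗[k] (V7 k ⊗[k] V7 k)) :=
  LinearMap.range (LinearMap.lTensor (V7 k) (RT k).subtype)

/-- The subspace `R ⊗ V` of `V ⊗ V ⊗ V` (transported along the associator). -/
noncomputable def RtensV (k : Type) [Field k] : Submodule k (V7 k ⊗[k] (V7 k ⊗[k] V7 k)) :=
  LinearMap.range ((TensorProduct.assoc k (V7 k) (V7 k) (V7 k)).toLinearMap ∘ₗ
    LinearMap.rTensor (V7 k) (RT k).subtype)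

namespace TensorProduct

variable {R ι N : Type*} [CommSemiring R] [Fintype ι] [DecidableEq ι] [AddCommMonoid N]
  [Module R N]

lemma exists_eq_sum_tmul_single (w : N ⊗[R] (ι → R)) :
    ∃ σ : ι → N, w = ∑ i, σ i ⊗ₜ Pi.single i 1 := by
  refine ⟨piScalarRight R R N ι w, ?_⟩
  conv_lhs => rw [← (piScalarRight R R N ι).symm_apply_apply w,
    ← Finset.univ_sum_single (piScalarRight R R N ι w)]
  simp only [map_sum, piScalarRight_symm_single]

lemma exists_eq_sum_single_tmul (w : (ι → R) ⊗[R] N) :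
    ∃ ρ : ι → N, w = ∑ i, Pi.single i 1 ⊗ₜ ρ i := by
  obtain ⟨ρ, hρ⟩ := exists_eq_sum_tmul_single (TensorProduct.comm R _ _ w)
  refine ⟨ρ, ?_⟩
  rw [← (TensorProduct.comm R _ _).symm_apply_apply w, hρ]
  simp only [map_sum, comm_symm_tmul]

variable {κ : Type*} [Fintype κ] {r : κ → N}

lemma exists_eq_sum_single_tmul_sum_smul_of_mem_range_lTensor {t : (ι → R) ⊗[R] N}
    (ht : t ∈ LinearMap.range
      (LinearMap.lTensor (ι → R) (Submodule.span R (Set.range r)).subtype)) :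
    ∃ c : ι → κ → R, t = ∑ i, Pi.single i 1 ⊗ₜ (∑ l, c i l • r l) := by
  obtain ⟨w, rfl⟩ := ht
  obtain ⟨ρ, rfl⟩ := exists_eq_sum_single_tmul w
  choose c hc using fun i ↦ (Submodule.mem_span_range_iff_exists_fun R).1 (ρ i).2
  exact ⟨c, by simp only [map_sum, LinearMap.lTensor_tmul, Submodule.subtype_apply, hc]⟩

lemma exists_eq_sum_sum_smul_tmul_single_of_mem_range_rTensor {t : N ⊗[R] (ι → R)}
    (ht : t ∈ LinearMap.range
      (LinearMap.rTensor (ι → R) (Submodule.span R (Set.range r)).subtype)) :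
    ∃ d : ι → κ → R, t = ∑ p, (∑ l, d p l • r l) ⊗ₜ Pi.single p 1 := by
  obtain ⟨w, rfl⟩ := ht
  obtain ⟨σ, rfl⟩ := exists_eq_sum_tmul_single w
  choose d hd using fun p ↦ (Submodule.mem_span_range_iff_exists_fun R).1 (σ p).2
  exact ⟨d, by simp only [map_sum, LinearMap.rTensor_tmul, Submodule.subtype_apply, hd]⟩

end TensorProduct

section StructureConstants

variable {R ι : Type*} [CommSemiring R] [Fintype ι] [DecidableEq ι]

noncomputable def tripleTensor (a : ι → ι → ι → R) :
    (ι → R) ⊗[R] ((ι → R) ⊗[R] (ι → R)) :=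
  ∑ m, ∑ n, ∑ q, a m n q • (Pi.single m 1 ⊗ₜ (Pi.single n 1 ⊗ₜ Pi.single q 1))

lemma tripleTensor_injective : Function.Injective (tripleTensor (R := R) (ι := ι)) := by
  let b := Pi.basisFun R ι
  have hrepr (a : ι → ι → ι → R) :
      (b.tensorProduct (b.tensorProduct b)).repr (tripleTensor a) =
        fun t : ι × ι × ι ↦ a t.1 t.2.1 t.2.2 := by
    have h : tripleTensor a =
        ∑ t, a t.1 t.2.1 t.2.2 • b.tensorProduct (b.tensorProduct b) t := by
      simp only [tripleTensor, Fintype.sum_prod_type, Module.Basis.tensorProduct_apply,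
        Pi.basisFun_apply, b]
    rw [h, Module.Basis.repr_sum_self]
  intro a a' h
  funext m n q
  simpa [hrepr] using
    congrArg (fun x ↦ (b.tensorProduct (b.tensorProduct b)).repr x (m, n, q)) h

noncomputable def relTensor (e : ι → ι → ι → R) (l : ι) : (ι → R) ⊗[R] (ι → R) :=
  ∑ m, ∑ n, e l m n • (Pi.single m 1 ⊗ₜ Pi.single n 1)

lemma sum_single_tmul_sum_smul_rel (e : ι → ι → ι → R) (c : ι → ι → R) :
    ∑ i, Pi.single i 1 ⊗ₜ (∑ l, c i l • relTensor e l) =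
      tripleTensor fun m n q ↦ ∑ l, c m l * e l n q := by
  simp only [relTensor, tripleTensor, tmul_sum, tmul_smul, Finset.smul_sum, smul_smul,
    Finset.sum_smul]
  refine Finset.sum_congr rfl fun m _ ↦ ?_
  rw [Finset.sum_comm]
  refine Finset.sum_congr rfl fun n _ ↦ ?_
  rw [Finset.sum_comm]

lemma assoc_sum_sum_smul_rel_tmul_single (e : ι → ι → ι → R) (d : ι → ι → R) :
    TensorProduct.assoc R _ _ _ (∑ p, (∑ l, d p l • relTensor e l) ⊗ₜ Pi.single p 1) =
      tripleTensor fun m n q ↦ ∑ l, d q l * e l m n := by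
  simp only [relTensor, tripleTensor, sum_tmul, smul_tmul', map_sum, assoc_tmul,
    Finset.smul_sum, smul_smul, Finset.sum_smul]
  conv_lhs => enter [2, p]; rw [Finset.sum_comm]; enter [2, m]; rw [Finset.sum_comm]
  conv_lhs => rw [Finset.sum_comm]; enter [2, m]; rw [Finset.sum_comm]

lemma exists_sum_mul_eq_sum_mul_of_mem_inf (e : ι → ι → ι → R)
    {t : (ι → R) ⊗[R] ((ι → R) ⊗[R] (ι → R))}
    (h₁ : t ∈ LinearMap.range
      (LinearMap.lTensor (ι → R) (Submodule.span R (Set.range (relTensor e))).subtype))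
    (h₂ : t ∈ LinearMap.range ((TensorProduct.assoc R _ _ _).toLinearMap ∘ₗ
      LinearMap.rTensor (ι → R) (Submodule.span R (Set.range (relTensor e))).subtype)) :
    ∃ c d : ι → ι → R, (∀ m n q, ∑ l, c m l * e l n q = ∑ l, d q l * e l m n) ∧
      t = ∑ i, Pi.single i 1 ⊗ₜ (∑ l, c i l • relTensor e l) := by
  obtain ⟨c, hc⟩ := exists_eq_sum_single_tmul_sum_smul_of_mem_range_lTensor h₁
  obtain ⟨u, rfl⟩ := h₂
  obtain ⟨d, hd⟩ := exists_eq_sum_sum_smul_tmul_single_of_mem_range_rTensor ⟨u, rfl⟩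
  refine ⟨c, d, fun m n q ↦ ?_, hc⟩
  have h := hc.symm.trans (congrArg (TensorProduct.assoc R _ _ _) hd)
  rw [sum_single_tmul_sum_smul_rel, assoc_sum_sum_smul_rel_tmul_single] at h
  exact congrFun (congrFun (congrFun (tripleTensor_injective h) m) n) q

end StructureConstants

section Fano

lemma eps_cyclic (i j l : Fin 7) : eps i j l = eps j l i := by
  revert i j l; decide

lemma eps_swap_right (i j l : Fin 7) : eps i j l = -eps i l j := by
  revert i j l; decide

lemma eps_self_right (i j : Fin 7) : eps i j j = 0 := by
  revert i j; decide

-- `q` is the third point of the Fano line through `l` and `m`.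
lemma exists_isUnit_eps_of_ne {l m : Fin 7} (h : l ≠ m) :
    ∃ q, IsUnit (eps l m q) ∧ ∀ l', l' ≠ l → eps l' m q = 0 := by
  simp only [Int.isUnit_iff]
  revert l m; decide

variable {R : Type*} [CommRing R]

lemma eq_zero_of_sum_mul_eps_eq_zero {a : Fin 7 → R} {m : Fin 7}
    (h : ∀ q, ∑ l, a l * eps l m q = 0) {l : Fin 7} (hl : l ≠ m) : a l = 0 := by
  obtain ⟨q, hunit, hline⟩ := exists_isUnit_eps_of_ne hl
  have hq := h q
  rw [Finset.sum_eq_single l (fun l' _ hl' ↦ by rw [hline l' hl', Int.cast_zero, mul_zero])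
    (by simp)] at hq
  exact ((hunit.map (Int.castRingHom R)).mul_left_eq_zero).1 hq

lemma eq_ite_of_sum_mul_eps_eq {c d : Fin 7 → Fin 7 → R}
    (h : ∀ m n q, ∑ l, c m l * eps l n q = ∑ l, d q l * eps l m n) (i l : Fin 7) :
    c i l = if i = l then c 0 0 else 0 := by
  have hc (m l : Fin 7) (hl : l ≠ m) : c m l = 0 :=
    eq_zero_of_sum_mul_eps_eq_zero (fun q ↦ by simpa [eps_self_right] using h m m q) hl
  have hd (q l : Fin 7) (hl : l ≠ q) : d q l = 0 :=
    eq_zero_of_sum_mul_eps_eq_zero (fun m ↦ by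
      simpa [eps_self_right, eps_swap_right _ m q, Finset.sum_neg_distrib] using
        (h m q q).symm) hl
  have hdiag (m n q : Fin 7) : c m m * eps m n q = d q q * eps m n q := by
    have hmnq := h m n q
    rw [Finset.sum_eq_single m (fun l _ hl ↦ by rw [hc m l hl, zero_mul]) (by simp),
      Finset.sum_eq_single q (fun l _ hl ↦ by rw [hd q l hl, zero_mul]) (by simp),
      eps_cyclic q m n] at hmnq
    exact hmnq
  have hcd (m q : Fin 7) (hmq : m ≠ q) : c m m = d q q := by
    obtain ⟨n, hunit, -⟩ := exists_isUnit_eps_of_ne hmq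
    rw [eps_swap_right, IsUnit.neg_iff] at hunit
    exact ((hunit.map (Int.castRingHom R)).mul_left_inj).1 (hdiag m n q)
  obtain ⟨q, hqi, hq0⟩ : ∃ q : Fin 7, i ≠ q ∧ 0 ≠ q := by revert i; decide
  split_ifs with hil
  · rw [← hil, hcd i q hqi, hcd 0 q hq0]
  · exact hc i l (Ne.symm hil)

end Fano

section Superpotential

variable (k : Type) [Field k]

lemma rT_eq_relTensor : rT k = relTensor fun a b c ↦ (eps a b c : k) := rfl

lemma WT_eq_tripleTensor : WT k = tripleTensor fun a b c ↦ (eps a b c : k) := rfl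

lemma WT_eq_sum_xv_tmul_rT : WT k = ∑ i : Fin 7, xv k i ⊗ₜ[k] rT k i := by
  have h := sum_single_tmul_sum_smul_rel (fun a b c ↦ (eps a b c : k))
    fun i l ↦ if i = l then 1 else 0
  simp only [ite_smul, one_smul, zero_smul, ite_mul, one_mul, zero_mul, Finset.sum_ite_eq,
    Finset.mem_univ, if_true] at h
  exact (WT_eq_tripleTensor k).trans h.symm

lemma WT_eq_assoc_sum_rT_tmul_xv :
    WT k = TensorProduct.assoc k (V7 k) (V7 k) (V7 k) (∑ i : Fin 7, rT k i ⊗ₜ[k] xv k i) := by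
  have h := assoc_sum_sum_smul_rel_tmul_single (fun a b c ↦ (eps a b c : k))
    fun i l ↦ if i = l then 1 else 0
  simp only [ite_smul, one_smul, zero_smul, ite_mul, one_mul, zero_mul, Finset.sum_ite_eq,
    Finset.mem_univ, if_true, ← eps_cyclic] at h
  exact (WT_eq_tripleTensor k).trans h.symm

lemma WT_ne_zero : WT k ≠ 0 := by
  intro h
  have h₀ : tripleTensor (fun a b c ↦ (eps a b c : k)) = tripleTensor 0 := by
    rw [← WT_eq_tripleTensor, h]
    simp [tripleTensor]
  have h012 := congrFun (congrFun (congrFun (tripleTensor_injective h₀) 0) 1) 2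
  simp [show eps 0 1 2 = 1 by decide] at h012

lemma WT_mem_VtensR : WT k ∈ VtensR k := by
  rw [WT_eq_sum_xv_tmul_rT]
  exact Submodule.sum_mem _ fun i _ ↦
    ⟨xv k i ⊗ₜ ⟨rT k i, Submodule.subset_span ⟨i, rfl⟩⟩, LinearMap.lTensor_tmul ..⟩

lemma WT_mem_RtensV : WT k ∈ RtensV k := by
  rw [WT_eq_assoc_sum_rT_tmul_xv, map_sum]
  exact Submodule.sum_mem _ fun i _ ↦
    ⟨⟨rT k i, Submodule.subset_span ⟨i, rfl⟩⟩ ⊗ₜ xv k i, by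
      rw [LinearMap.comp_apply, LinearMap.rTensor_tmul]; rfl⟩

lemma mem_span_WT_of_mem_inf {t : V7 k ⊗[k] (V7 k ⊗[k] V7 k)}
    (ht : t ∈ VtensR k ⊓ RtensV k) : t ∈ Submodule.span k {WT k} := by
  obtain ⟨c, d, hcd, rfl⟩ := exists_sum_mul_eq_sum_mul_of_mem_inf _ ht.1 ht.2
  refine Submodule.mem_span_singleton.2 ⟨c 0 0, ?_⟩
  have hc := eq_ite_of_sum_mul_eps_eq hcd
  have hrow (i : Fin 7) :
      ∑ l, c i l • relTensor (fun a b c ↦ (eps a b c : k)) l = c 0 0 • rT k i := by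
    rw [Finset.sum_eq_single i (fun l _ hl ↦ by rw [hc, if_neg hl.symm, zero_smul]) (by simp),
      hc, if_pos rfl, rT_eq_relTensor]
  simp only [hrow, tmul_smul, ← Finset.smul_sum, WT_eq_sum_xv_tmul_rT]
  rfl

end Superpotential

/-- STATEMENT 8: `(V ⊗ R) ∩ (R ⊗ V)` is one-dimensional, spanned by the superpotential
`W`; moreover `W = Σ_i x_i ⊗ r_i = Σ_i r_i ⊗ x_i`. -/
theorem superpotential_spans_intersection (k : Type) [Field k] :
    VtensR k ⊓ RtensV k = Submodule.span k {WT k} ∧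
    WT k ≠ 0 ∧
    WT k = ∑ i : Fin 7, xv k i ⊗ₜ[k] rT k i ∧
    WT k = (TensorProduct.assoc k (V7 k) (V7 k) (V7 k))
      (∑ i : Fin 7, rT k i ⊗ₜ[k] xv k i) := by
  refine ⟨le_antisymm (fun t ↦ mem_span_WT_of_mem_inf k) ?_, WT_ne_zero k,
    WT_eq_sum_xv_tmul_rT k, WT_eq_assoc_sum_rT_tmul_xv k⟩
  rw [Submodule.span_le, Set.singleton_subset_iff]
  exact ⟨WT_mem_VtensR k, WT_mem_RtensV k⟩
end

section
/- For every integer n ≥ 1 there is a surjective ℝ-algebra homomorphism from A_ℝ onto the matrix algebra M_n(ℂ) (M_n(ℂ) regarded as an ℝ-algebra). -/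
/-! Send `x₁ ↦ i·1`, `x₂, x₃ ↦ 0`, `x₄, x₅ ↦ a, b` and `x₆, x₇ ↦ i a, i b`, where `a = E₀₀` is a
matrix unit and `b = P` the permutation matrix of the cyclic shift. As `i` is central with
`i² = -1`, the relations reduce to `[a, b] + i²[a, b] = 0`, `i([a, b] + [b, a]) = 0` and
commutators with `i`. The image is an `ℝ`-algebra containing `P ^ k * E₀₀ * P ^ l`, which are all
the matrix units since the shift is transitive, and multiplication by `i` supplies the imaginary
parts, so it is all of `M_n(ℂ)`. -/

open Matrix Equiv

section PermMatrix

variable {ι α : Type*} [Fintype ι] [DecidableEq ι] [NonAssocSemiring α]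

theorem Equiv.Perm.permMatrix_mul_single (σ : Perm ι) (i j : ι) (r : α) :
    σ.permMatrix α * single i j r = single (σ⁻¹ i) j r := by
  rw [Perm.permMatrix, PEquiv.toMatrix_toPEquiv_mul]
  exact submatrix_single_equiv σ (Equiv.refl ι) i j r

theorem Equiv.Perm.single_mul_permMatrix (σ : Perm ι) (i j : ι) (r : α) :
    single i j r * σ.permMatrix α = single i (σ j) r := by
  rw [Perm.permMatrix, PEquiv.mul_toMatrix_toPEquiv]
  exact submatrix_single_equiv (Equiv.refl ι) σ.symm i j r

end PermMatrix

theorem Equiv.Perm.SameCycle.mem_of_mapsTo {α : Type*} [Finite α] {σ : Perm α} {s : Set α}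
    (hs : Set.MapsTo σ s s) {x y : α} (hxy : σ.SameCycle x y) (hx : x ∈ s) : y ∈ s := by
  obtain ⟨k, -, rfl⟩ := hxy.exists_pow_eq'
  clear hxy
  induction k with
  | zero => exact hx
  | succ k ih => rw [pow_succ', Perm.mul_apply]; exact hs ih

theorem sameCycle_finRotate {n : ℕ} (i j : Fin n) : (finRotate n).SameCycle i j := by
  have : NeZero n := NeZero.of_pos i.pos
  refine ⟨(j - i).val, ?_⟩
  rw [zpow_natCast, Perm.coe_pow, ← finCycle_eq_finRotate_iterate, finCycle_apply,
    add_sub_cancel]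

theorem Matrix.single_one_mem_of_permMatrix_mem {ι α : Type*} [Fintype ι] [DecidableEq ι]
    [NonAssocSemiring α] {S : Subsemiring (Matrix ι ι α)} {σ : Perm ι} {i₀ : ι}
    (hσ : ∀ j, σ.SameCycle i₀ j) (hE : single i₀ i₀ (1 : α) ∈ S) (hP : σ.permMatrix α ∈ S)
    (j k : ι) : single j k (1 : α) ∈ S := by
  have hrow : single j i₀ (1 : α) ∈ S := by
    refine (Perm.sameCycle_inv.2 (hσ j)).mem_of_mapsTo (s := {j | single j i₀ (1 : α) ∈ S})
      (fun j hj => ?_) hE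
    show single (σ⁻¹ j) i₀ 1 ∈ S
    rw [← σ.permMatrix_mul_single]
    exact S.mul_mem hP hj
  have hcol : single i₀ k (1 : α) ∈ S := by
    refine (hσ k).mem_of_mapsTo (s := {k | single i₀ k (1 : α) ∈ S}) (fun k hk => ?_) hE
    show single i₀ (σ k) 1 ∈ S
    rw [← σ.single_mul_permMatrix]
    exact S.mul_mem hk hP
  simpa only [single_mul_single_same, mul_one] using S.mul_mem hrow hcol

theorem Matrix.adjoin_I_single_permMatrix_eq_top {ι : Type*} [Fintype ι] [DecidableEq ι]
    (σ : Perm ι) (i₀ : ι) (hσ : ∀ j, σ.SameCycle i₀ j) :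
    Algebra.adjoin ℝ {Complex.I • 1, single i₀ i₀ (1 : ℂ), σ.permMatrix ℂ} = ⊤ := by
  set S := Algebra.adjoin ℝ {Complex.I • 1, single i₀ i₀ (1 : ℂ), σ.permMatrix ℂ}
  have hI : Complex.I • (1 : Matrix ι ι ℂ) ∈ S := Algebra.subset_adjoin (by simp)
  have hunit := single_one_mem_of_permMatrix_mem (S := S.toSubsemiring) hσ
    (Algebra.subset_adjoin (by simp)) (Algebra.subset_adjoin (by simp))
  have hsingle (j k : ι) (c : ℂ) : single j k c ∈ S := by
    have h := add_mem (S.smul_mem (hunit j k) c.re) (S.smul_mem (S.mul_mem hI (hunit j k)) c.im)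
    rwa [smul_mul_assoc, one_mul, smul_single, smul_single, smul_single, ← single_add,
      Complex.real_smul, Complex.real_smul, smul_eq_mul, mul_one, mul_one, Complex.re_add_im] at h
  refine eq_top_iff.2 fun M _ => ?_
  rw [matrix_eq_sum_single M]
  exact Subalgebra.sum_mem _ fun j _ => Subalgebra.sum_mem _ fun k _ => hsingle j k (M j k)

namespace SmithA

variable {B : Type*} [Ring B]

def images (j a b : B) : Fin 7 → B :=
  ![j, 0, 0, a, b, j * a, j * b]

theorem images_rel {j : B} (hj : ∀ x, Commute j x) (hj2 : j * j = -1) (a b : B) (ℓ : Fin 7) :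
    ∑ m : Fin 7, ∑ n : Fin 7, eps ℓ m n • (images j a b m * images j a b n) = 0 := by
  have hcomm (x y : B) : x * (j * y) = j * (x * y) := by rw [← mul_assoc, ← (hj x).eq, mul_assoc]
  have hsq (y : B) : j * (j * y) = -y := by rw [← mul_assoc, hj2, neg_one_mul]
  fin_cases ℓ <;>
    simp +decide only [Fin.sum_univ_seven, eps, images, cons_val, ↓reduceIte, mul_assoc,
      hcomm, hsq, hj2, (hj a).symm.eq, (hj b).symm.eq, mul_zero, zero_mul, zsmul_zero, zero_smul,
      one_smul, neg_smul, smul_neg, add_zero, zero_add] <;>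
    abel

variable [Algebra ℝ B] {j : B}

noncomputable def rep (hj : ∀ x, Commute j x) (hj2 : j * j = -1) (a b : B) : SmithA ℝ →ₐ[ℝ] B :=
  RingQuot.liftAlgHom ℝ ⟨FreeAlgebra.lift ℝ (images j a b), by
    rintro _ _ ⟨ℓ⟩
    simpa only [relElem, map_sum, map_zsmul, map_mul, FreeAlgebra.lift_ι_apply, map_zero]
      using images_rel hj hj2 a b ℓ⟩

theorem rep_xg (hj : ∀ x, Commute j x) (hj2 : j * j = -1) (a b : B) (i : Fin 7) :
    rep hj hj2 a b (xg ℝ i) = images j a b i := by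
  rw [xg, rep, RingQuot.liftAlgHom_mkAlgHom_apply, FreeAlgebra.lift_ι_apply]

theorem adjoin_le_range_rep (hj : ∀ x, Commute j x) (hj2 : j * j = -1) (a b : B) :
    Algebra.adjoin ℝ {j, a, b} ≤ (rep hj hj2 a b).range := by
  rw [Algebra.adjoin_le_iff, Set.insert_subset_iff, Set.insert_subset_iff,
    Set.singleton_subset_iff]
  exact ⟨⟨xg ℝ 0, rep_xg hj hj2 a b 0⟩, ⟨xg ℝ 3, rep_xg hj hj2 a b 3⟩,
    ⟨xg ℝ 4, rep_xg hj hj2 a b 4⟩⟩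

end SmithA

/-- STATEMENT 13: for every integer `n ≥ 1` there is a surjective homomorphism of
`ℝ`-algebras from `A_ℝ` onto the matrix algebra `M_n(ℂ)`. -/
theorem SmithA_surjects_onto_complex_matrices (n : ℕ) (hn : 1 ≤ n) :
    ∃ f : SmithA ℝ →ₐ[ℝ] Matrix (Fin n) (Fin n) ℂ, Function.Surjective f := by
  let i₀ : Fin n := ⟨0, hn⟩
  have hI : ∀ x : Matrix (Fin n) (Fin n) ℂ, Commute (Complex.I • 1) x :=
    fun x => (Commute.one_left x).smul_left Complex.I
  have hI2 : (Complex.I • 1 : Matrix (Fin n) (Fin n) ℂ) * (Complex.I • 1) = -1 := by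
    rw [smul_mul_smul, Complex.I_mul_I, one_mul, neg_one_smul]
  refine ⟨SmithA.rep hI hI2 (single i₀ i₀ 1) ((finRotate n).permMatrix ℂ), ?_⟩
  rw [← AlgHom.range_eq_top, eq_top_iff,
    ← adjoin_I_single_permMatrix_eq_top (finRotate n) i₀ (sameCycle_finRotate i₀)]
  exact SmithA.adjoin_le_range_rep hI hI2 _ _
end

section
/- Let n ≥ 1 and let X_1, …, X_7 be real skew-symmetric n×n matrices satisfying the seven relations Σ_{i,j=1}^7 ε^{ℓij} X_i X_j = 0 for each ℓ ∈ {1,…,7} (so that x_i ↦ X_i defines an A_ℝ-module structure on ℝ^n in which each generator acts skew-symmetrically). Then X_p X_q = X_q X_p for all p, q ∈ {1,…,7}; that is, the module is actually a module over the commutative polynomial ring ℝ[x_1,…,x_7]. -/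

lemma auxTraceNonneg (n : ℕ) (A : Matrix (Fin n) (Fin n) ℝ) :
    0 ≤ Matrix.trace (Matrix.transpose A * A) := by
  rw [Matrix.trace]
  apply Finset.sum_nonneg
  intro i _
  rw [Matrix.diag_apply, Matrix.mul_apply]
  apply Finset.sum_nonneg
  intro j _
  rw [Matrix.transpose_apply]
  exact mul_self_nonneg _

lemma auxTraceZero (n : ℕ) (A : Matrix (Fin n) (Fin n) ℝ)
    (h : Matrix.trace (Matrix.transpose A * A) = 0) : A = 0 := by
  rw [Matrix.trace] at h
  have h1 := (Finset.sum_eq_zero_iff_of_nonneg (by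
    intro i _
    rw [Matrix.diag_apply, Matrix.mul_apply]
    exact Finset.sum_nonneg fun j _ => by rw [Matrix.transpose_apply]; exact mul_self_nonneg _)).mp h
  ext j i
  have h2 := h1 i (Finset.mem_univ i)
  rw [Matrix.diag_apply, Matrix.mul_apply] at h2
  have h3 := (Finset.sum_eq_zero_iff_of_nonneg (fun j _ => by
    rw [Matrix.transpose_apply]; exact mul_self_nonneg _)).mp h2 j (Finset.mem_univ j)
  rw [Matrix.transpose_apply] at h3
  simpa using mul_self_eq_zero.mp h3

set_option maxHeartbeats 4000000 in
/-- STATEMENT 18: if `X_1, …, X_7` are real skew-symmetric `n×n` matrices satisfying the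
seven relations `Σ_{i,j} ε^{ℓij} X_i X_j = 0` (so `x_i ↦ X_i` defines an `A_ℝ`-module
structure on `ℝ^n` in which every generator acts skew-symmetrically), then the `X_i`
pairwise commute, i.e. the module is a module over the polynomial ring `ℝ[x_1,…,x_7]`. -/
theorem skewSymmetric_representation_commutes (n : ℕ) (hn : 1 ≤ n)
    (X : Fin 7 → Matrix (Fin n) (Fin n) ℝ)
    (hskew : ∀ i, Matrix.transpose (X i) = -(X i))
    (hrel : ∀ ℓ : Fin 7, ∑ i : Fin 7, ∑ j : Fin 7, eps ℓ i j • (X i * X j) = 0) :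
    ∀ p q : Fin 7, X p * X q = X q * X p := by
  have hzero : ∑ p : Fin 7, ∑ q : Fin 7,
      Matrix.trace ((X p * X q - X q * X p) * (X p * X q - X q * X p)) = 0 := by
    have hl0 := hrel 0
    simp only [Fin.sum_univ_seven,
      show eps 0 0 0 = 0 from rfl,
      show eps 0 0 1 = 0 from rfl,
      show eps 0 0 2 = 0 from rfl,
      show eps 0 0 3 = 0 from rfl,
      show eps 0 0 4 = 0 from rfl,
      show eps 0 0 5 = 0 from rfl,
      show eps 0 0 6 = 0 from rfl,
      show eps 0 1 0 = 0 from rfl,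
      show eps 0 1 1 = 0 from rfl,
      show eps 0 1 2 = 1 from rfl,
      show eps 0 1 3 = 0 from rfl,
      show eps 0 1 4 = 0 from rfl,
      show eps 0 1 5 = 0 from rfl,
      show eps 0 1 6 = 0 from rfl,
      show eps 0 2 0 = 0 from rfl,
      show eps 0 2 1 = -1 from rfl,
      show eps 0 2 2 = 0 from rfl,
      show eps 0 2 3 = 0 from rfl,
      show eps 0 2 4 = 0 from rfl,
      show eps 0 2 5 = 0 from rfl,
      show eps 0 2 6 = 0 from rfl,
      show eps 0 3 0 = 0 from rfl,
      show eps 0 3 1 = 0 from rfl,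
      show eps 0 3 2 = 0 from rfl,
      show eps 0 3 3 = 0 from rfl,
      show eps 0 3 4 = 1 from rfl,
      show eps 0 3 5 = 0 from rfl,
      show eps 0 3 6 = 0 from rfl,
      show eps 0 4 0 = 0 from rfl,
      show eps 0 4 1 = 0 from rfl,
      show eps 0 4 2 = 0 from rfl,
      show eps 0 4 3 = -1 from rfl,
      show eps 0 4 4 = 0 from rfl,
      show eps 0 4 5 = 0 from rfl,
      show eps 0 4 6 = 0 from rfl,
      show eps 0 5 0 = 0 from rfl,
      show eps 0 5 1 = 0 from rfl,
      show eps 0 5 2 = 0 from rfl,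
      show eps 0 5 3 = 0 from rfl,
      show eps 0 5 4 = 0 from rfl,
      show eps 0 5 5 = 0 from rfl,
      show eps 0 5 6 = 1 from rfl,
      show eps 0 6 0 = 0 from rfl,
      show eps 0 6 1 = 0 from rfl,
      show eps 0 6 2 = 0 from rfl,
      show eps 0 6 3 = 0 from rfl,
      show eps 0 6 4 = 0 from rfl,
      show eps 0 6 5 = -1 from rfl,
      show eps 0 6 6 = 0 from rfl,
      one_smul, neg_smul, zero_smul, add_zero, zero_add, neg_zero] at hl0
    have hl1 := hrel 1
    simp only [Fin.sum_univ_seven,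
      show eps 1 0 0 = 0 from rfl,
      show eps 1 0 1 = 0 from rfl,
      show eps 1 0 2 = -1 from rfl,
      show eps 1 0 3 = 0 from rfl,
      show eps 1 0 4 = 0 from rfl,
      show eps 1 0 5 = 0 from rfl,
      show eps 1 0 6 = 0 from rfl,
      show eps 1 1 0 = 0 from rfl,
      show eps 1 1 1 = 0 from rfl,
      show eps 1 1 2 = 0 from rfl,
      show eps 1 1 3 = 0 from rfl,
      show eps 1 1 4 = 0 from rfl,
      show eps 1 1 5 = 0 from rfl,
      show eps 1 1 6 = 0 from rfl,
      show eps 1 2 0 = 1 from rfl,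
      show eps 1 2 1 = 0 from rfl,
      show eps 1 2 2 = 0 from rfl,
      show eps 1 2 3 = 0 from rfl,
      show eps 1 2 4 = 0 from rfl,
      show eps 1 2 5 = 0 from rfl,
      show eps 1 2 6 = 0 from rfl,
      show eps 1 3 0 = 0 from rfl,
      show eps 1 3 1 = 0 from rfl,
      show eps 1 3 2 = 0 from rfl,
      show eps 1 3 3 = 0 from rfl,
      show eps 1 3 4 = 0 from rfl,
      show eps 1 3 5 = 1 from rfl,
      show eps 1 3 6 = 0 from rfl,
      show eps 1 4 0 = 0 from rfl,
      show eps 1 4 1 = 0 from rfl,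
      show eps 1 4 2 = 0 from rfl,
      show eps 1 4 3 = 0 from rfl,
      show eps 1 4 4 = 0 from rfl,
      show eps 1 4 5 = 0 from rfl,
      show eps 1 4 6 = -1 from rfl,
      show eps 1 5 0 = 0 from rfl,
      show eps 1 5 1 = 0 from rfl,
      show eps 1 5 2 = 0 from rfl,
      show eps 1 5 3 = -1 from rfl,
      show eps 1 5 4 = 0 from rfl,
      show eps 1 5 5 = 0 from rfl,
      show eps 1 5 6 = 0 from rfl,
      show eps 1 6 0 = 0 from rfl,
      show eps 1 6 1 = 0 from rfl,
      show eps 1 6 2 = 0 from rfl,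
      show eps 1 6 3 = 0 from rfl,
      show eps 1 6 4 = 1 from rfl,
      show eps 1 6 5 = 0 from rfl,
      show eps 1 6 6 = 0 from rfl,
      one_smul, neg_smul, zero_smul, add_zero, zero_add, neg_zero] at hl1
    have hl2 := hrel 2
    simp only [Fin.sum_univ_seven,
      show eps 2 0 0 = 0 from rfl,
      show eps 2 0 1 = 1 from rfl,
      show eps 2 0 2 = 0 from rfl,
      show eps 2 0 3 = 0 from rfl,
      show eps 2 0 4 = 0 from rfl,
      show eps 2 0 5 = 0 from rfl,
      show eps 2 0 6 = 0 from rfl,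
      show eps 2 1 0 = -1 from rfl,
      show eps 2 1 1 = 0 from rfl,
      show eps 2 1 2 = 0 from rfl,
      show eps 2 1 3 = 0 from rfl,
      show eps 2 1 4 = 0 from rfl,
      show eps 2 1 5 = 0 from rfl,
      show eps 2 1 6 = 0 from rfl,
      show eps 2 2 0 = 0 from rfl,
      show eps 2 2 1 = 0 from rfl,
      show eps 2 2 2 = 0 from rfl,
      show eps 2 2 3 = 0 from rfl,
      show eps 2 2 4 = 0 from rfl,
      show eps 2 2 5 = 0 from rfl,
      show eps 2 2 6 = 0 from rfl,
      show eps 2 3 0 = 0 from rfl,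
      show eps 2 3 1 = 0 from rfl,
      show eps 2 3 2 = 0 from rfl,
      show eps 2 3 3 = 0 from rfl,
      show eps 2 3 4 = 0 from rfl,
      show eps 2 3 5 = 0 from rfl,
      show eps 2 3 6 = -1 from rfl,
      show eps 2 4 0 = 0 from rfl,
      show eps 2 4 1 = 0 from rfl,
      show eps 2 4 2 = 0 from rfl,
      show eps 2 4 3 = 0 from rfl,
      show eps 2 4 4 = 0 from rfl,
      show eps 2 4 5 = -1 from rfl,
      show eps 2 4 6 = 0 from rfl,
      show eps 2 5 0 = 0 from rfl,
      show eps 2 5 1 = 0 from rfl,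
      show eps 2 5 2 = 0 from rfl,
      show eps 2 5 3 = 0 from rfl,
      show eps 2 5 4 = 1 from rfl,
      show eps 2 5 5 = 0 from rfl,
      show eps 2 5 6 = 0 from rfl,
      show eps 2 6 0 = 0 from rfl,
      show eps 2 6 1 = 0 from rfl,
      show eps 2 6 2 = 0 from rfl,
      show eps 2 6 3 = 1 from rfl,
      show eps 2 6 4 = 0 from rfl,
      show eps 2 6 5 = 0 from rfl,
      show eps 2 6 6 = 0 from rfl,
      one_smul, neg_smul, zero_smul, add_zero, zero_add, neg_zero] at hl2
    have hl3 := hrel 3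
    simp only [Fin.sum_univ_seven,
      show eps 3 0 0 = 0 from rfl,
      show eps 3 0 1 = 0 from rfl,
      show eps 3 0 2 = 0 from rfl,
      show eps 3 0 3 = 0 from rfl,
      show eps 3 0 4 = -1 from rfl,
      show eps 3 0 5 = 0 from rfl,
      show eps 3 0 6 = 0 from rfl,
      show eps 3 1 0 = 0 from rfl,
      show eps 3 1 1 = 0 from rfl,
      show eps 3 1 2 = 0 from rfl,
      show eps 3 1 3 = 0 from rfl,
      show eps 3 1 4 = 0 from rfl,
      show eps 3 1 5 = -1 from rfl,
      show eps 3 1 6 = 0 from rfl,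
      show eps 3 2 0 = 0 from rfl,
      show eps 3 2 1 = 0 from rfl,
      show eps 3 2 2 = 0 from rfl,
      show eps 3 2 3 = 0 from rfl,
      show eps 3 2 4 = 0 from rfl,
      show eps 3 2 5 = 0 from rfl,
      show eps 3 2 6 = 1 from rfl,
      show eps 3 3 0 = 0 from rfl,
      show eps 3 3 1 = 0 from rfl,
      show eps 3 3 2 = 0 from rfl,
      show eps 3 3 3 = 0 from rfl,
      show eps 3 3 4 = 0 from rfl,
      show eps 3 3 5 = 0 from rfl,
      show eps 3 3 6 = 0 from rfl,
      show eps 3 4 0 = 1 from rfl,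
      show eps 3 4 1 = 0 from rfl,
      show eps 3 4 2 = 0 from rfl,
      show eps 3 4 3 = 0 from rfl,
      show eps 3 4 4 = 0 from rfl,
      show eps 3 4 5 = 0 from rfl,
      show eps 3 4 6 = 0 from rfl,
      show eps 3 5 0 = 0 from rfl,
      show eps 3 5 1 = 1 from rfl,
      show eps 3 5 2 = 0 from rfl,
      show eps 3 5 3 = 0 from rfl,
      show eps 3 5 4 = 0 from rfl,
      show eps 3 5 5 = 0 from rfl,
      show eps 3 5 6 = 0 from rfl,
      show eps 3 6 0 = 0 from rfl,
      show eps 3 6 1 = 0 from rfl,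
      show eps 3 6 2 = -1 from rfl,
      show eps 3 6 3 = 0 from rfl,
      show eps 3 6 4 = 0 from rfl,
      show eps 3 6 5 = 0 from rfl,
      show eps 3 6 6 = 0 from rfl,
      one_smul, neg_smul, zero_smul, add_zero, zero_add, neg_zero] at hl3
    have hl4 := hrel 4
    simp only [Fin.sum_univ_seven,
      show eps 4 0 0 = 0 from rfl,
      show eps 4 0 1 = 0 from rfl,
      show eps 4 0 2 = 0 from rfl,
      show eps 4 0 3 = 1 from rfl,
      show eps 4 0 4 = 0 from rfl,
      show eps 4 0 5 = 0 from rfl,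
      show eps 4 0 6 = 0 from rfl,
      show eps 4 1 0 = 0 from rfl,
      show eps 4 1 1 = 0 from rfl,
      show eps 4 1 2 = 0 from rfl,
      show eps 4 1 3 = 0 from rfl,
      show eps 4 1 4 = 0 from rfl,
      show eps 4 1 5 = 0 from rfl,
      show eps 4 1 6 = 1 from rfl,
      show eps 4 2 0 = 0 from rfl,
      show eps 4 2 1 = 0 from rfl,
      show eps 4 2 2 = 0 from rfl,
      show eps 4 2 3 = 0 from rfl,
      show eps 4 2 4 = 0 from rfl,
      show eps 4 2 5 = 1 from rfl,
      show eps 4 2 6 = 0 from rfl,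
      show eps 4 3 0 = -1 from rfl,
      show eps 4 3 1 = 0 from rfl,
      show eps 4 3 2 = 0 from rfl,
      show eps 4 3 3 = 0 from rfl,
      show eps 4 3 4 = 0 from rfl,
      show eps 4 3 5 = 0 from rfl,
      show eps 4 3 6 = 0 from rfl,
      show eps 4 4 0 = 0 from rfl,
      show eps 4 4 1 = 0 from rfl,
      show eps 4 4 2 = 0 from rfl,
      show eps 4 4 3 = 0 from rfl,
      show eps 4 4 4 = 0 from rfl,
      show eps 4 4 5 = 0 from rfl,
      show eps 4 4 6 = 0 from rfl,
      show eps 4 5 0 = 0 from rfl,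
      show eps 4 5 1 = 0 from rfl,
      show eps 4 5 2 = -1 from rfl,
      show eps 4 5 3 = 0 from rfl,
      show eps 4 5 4 = 0 from rfl,
      show eps 4 5 5 = 0 from rfl,
      show eps 4 5 6 = 0 from rfl,
      show eps 4 6 0 = 0 from rfl,
      show eps 4 6 1 = -1 from rfl,
      show eps 4 6 2 = 0 from rfl,
      show eps 4 6 3 = 0 from rfl,
      show eps 4 6 4 = 0 from rfl,
      show eps 4 6 5 = 0 from rfl,
      show eps 4 6 6 = 0 from rfl,
      one_smul, neg_smul, zero_smul, add_zero, zero_add, neg_zero] at hl4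
    have hl5 := hrel 5
    simp only [Fin.sum_univ_seven,
      show eps 5 0 0 = 0 from rfl,
      show eps 5 0 1 = 0 from rfl,
      show eps 5 0 2 = 0 from rfl,
      show eps 5 0 3 = 0 from rfl,
      show eps 5 0 4 = 0 from rfl,
      show eps 5 0 5 = 0 from rfl,
      show eps 5 0 6 = -1 from rfl,
      show eps 5 1 0 = 0 from rfl,
      show eps 5 1 1 = 0 from rfl,
      show eps 5 1 2 = 0 from rfl,
      show eps 5 1 3 = 1 from rfl,
      show eps 5 1 4 = 0 from rfl,
      show eps 5 1 5 = 0 from rfl,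
      show eps 5 1 6 = 0 from rfl,
      show eps 5 2 0 = 0 from rfl,
      show eps 5 2 1 = 0 from rfl,
      show eps 5 2 2 = 0 from rfl,
      show eps 5 2 3 = 0 from rfl,
      show eps 5 2 4 = -1 from rfl,
      show eps 5 2 5 = 0 from rfl,
      show eps 5 2 6 = 0 from rfl,
      show eps 5 3 0 = 0 from rfl,
      show eps 5 3 1 = -1 from rfl,
      show eps 5 3 2 = 0 from rfl,
      show eps 5 3 3 = 0 from rfl,
      show eps 5 3 4 = 0 from rfl,
      show eps 5 3 5 = 0 from rfl,
      show eps 5 3 6 = 0 from rfl,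
      show eps 5 4 0 = 0 from rfl,
      show eps 5 4 1 = 0 from rfl,
      show eps 5 4 2 = 1 from rfl,
      show eps 5 4 3 = 0 from rfl,
      show eps 5 4 4 = 0 from rfl,
      show eps 5 4 5 = 0 from rfl,
      show eps 5 4 6 = 0 from rfl,
      show eps 5 5 0 = 0 from rfl,
      show eps 5 5 1 = 0 from rfl,
      show eps 5 5 2 = 0 from rfl,
      show eps 5 5 3 = 0 from rfl,
      show eps 5 5 4 = 0 from rfl,
      show eps 5 5 5 = 0 from rfl,
      show eps 5 5 6 = 0 from rfl,
      show eps 5 6 0 = 1 from rfl,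
      show eps 5 6 1 = 0 from rfl,
      show eps 5 6 2 = 0 from rfl,
      show eps 5 6 3 = 0 from rfl,
      show eps 5 6 4 = 0 from rfl,
      show eps 5 6 5 = 0 from rfl,
      show eps 5 6 6 = 0 from rfl,
      one_smul, neg_smul, zero_smul, add_zero, zero_add, neg_zero] at hl5
    have hl6 := hrel 6
    simp only [Fin.sum_univ_seven,
      show eps 6 0 0 = 0 from rfl,
      show eps 6 0 1 = 0 from rfl,
      show eps 6 0 2 = 0 from rfl,
      show eps 6 0 3 = 0 from rfl,
      show eps 6 0 4 = 0 from rfl,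
      show eps 6 0 5 = 1 from rfl,
      show eps 6 0 6 = 0 from rfl,
      show eps 6 1 0 = 0 from rfl,
      show eps 6 1 1 = 0 from rfl,
      show eps 6 1 2 = 0 from rfl,
      show eps 6 1 3 = 0 from rfl,
      show eps 6 1 4 = -1 from rfl,
      show eps 6 1 5 = 0 from rfl,
      show eps 6 1 6 = 0 from rfl,
      show eps 6 2 0 = 0 from rfl,
      show eps 6 2 1 = 0 from rfl,
      show eps 6 2 2 = 0 from rfl,
      show eps 6 2 3 = -1 from rfl,
      show eps 6 2 4 = 0 from rfl,
      show eps 6 2 5 = 0 from rfl,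
      show eps 6 2 6 = 0 from rfl,
      show eps 6 3 0 = 0 from rfl,
      show eps 6 3 1 = 0 from rfl,
      show eps 6 3 2 = 1 from rfl,
      show eps 6 3 3 = 0 from rfl,
      show eps 6 3 4 = 0 from rfl,
      show eps 6 3 5 = 0 from rfl,
      show eps 6 3 6 = 0 from rfl,
      show eps 6 4 0 = 0 from rfl,
      show eps 6 4 1 = 1 from rfl,
      show eps 6 4 2 = 0 from rfl,
      show eps 6 4 3 = 0 from rfl,
      show eps 6 4 4 = 0 from rfl,
      show eps 6 4 5 = 0 from rfl,
      show eps 6 4 6 = 0 from rfl,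
      show eps 6 5 0 = -1 from rfl,
      show eps 6 5 1 = 0 from rfl,
      show eps 6 5 2 = 0 from rfl,
      show eps 6 5 3 = 0 from rfl,
      show eps 6 5 4 = 0 from rfl,
      show eps 6 5 5 = 0 from rfl,
      show eps 6 5 6 = 0 from rfl,
      show eps 6 6 0 = 0 from rfl,
      show eps 6 6 1 = 0 from rfl,
      show eps 6 6 2 = 0 from rfl,
      show eps 6 6 3 = 0 from rfl,
      show eps 6 6 4 = 0 from rfl,
      show eps 6 6 5 = 0 from rfl,
      show eps 6 6 6 = 0 from rfl,
      one_smul, neg_smul, zero_smul, add_zero, zero_add, neg_zero] at hl6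
    have t0_1_2 := congrArg (fun M => Matrix.trace (X 1 * (X 2 * M))) hl0
    simp only [mul_sub, mul_add, mul_neg, mul_zero, Matrix.trace_sub, Matrix.trace_add, Matrix.trace_neg, Matrix.trace_zero] at t0_1_2
    have t0_2_1 := congrArg (fun M => Matrix.trace (X 2 * (X 1 * M))) hl0
    simp only [mul_sub, mul_add, mul_neg, mul_zero, Matrix.trace_sub, Matrix.trace_add, Matrix.trace_neg, Matrix.trace_zero] at t0_2_1
    have t0_3_4 := congrArg (fun M => Matrix.trace (X 3 * (X 4 * M))) hl0
    simp only [mul_sub, mul_add, mul_neg, mul_zero, Matrix.trace_sub, Matrix.trace_add, Matrix.trace_neg, Matrix.trace_zero] at t0_3_4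
    have t0_4_3 := congrArg (fun M => Matrix.trace (X 4 * (X 3 * M))) hl0
    simp only [mul_sub, mul_add, mul_neg, mul_zero, Matrix.trace_sub, Matrix.trace_add, Matrix.trace_neg, Matrix.trace_zero] at t0_4_3
    have t0_5_6 := congrArg (fun M => Matrix.trace (X 5 * (X 6 * M))) hl0
    simp only [mul_sub, mul_add, mul_neg, mul_zero, Matrix.trace_sub, Matrix.trace_add, Matrix.trace_neg, Matrix.trace_zero] at t0_5_6
    have t0_6_5 := congrArg (fun M => Matrix.trace (X 6 * (X 5 * M))) hl0
    simp only [mul_sub, mul_add, mul_neg, mul_zero, Matrix.trace_sub, Matrix.trace_add, Matrix.trace_neg, Matrix.trace_zero] at t0_6_5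
    have t1_0_2 := congrArg (fun M => Matrix.trace (X 0 * (X 2 * M))) hl1
    simp only [mul_sub, mul_add, mul_neg, mul_zero, Matrix.trace_sub, Matrix.trace_add, Matrix.trace_neg, Matrix.trace_zero] at t1_0_2
    have t1_2_0 := congrArg (fun M => Matrix.trace (X 2 * (X 0 * M))) hl1
    simp only [mul_sub, mul_add, mul_neg, mul_zero, Matrix.trace_sub, Matrix.trace_add, Matrix.trace_neg, Matrix.trace_zero] at t1_2_0
    have t1_3_5 := congrArg (fun M => Matrix.trace (X 3 * (X 5 * M))) hl1
    simp only [mul_sub, mul_add, mul_neg, mul_zero, Matrix.trace_sub, Matrix.trace_add, Matrix.trace_neg, Matrix.trace_zero] at t1_3_5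
    have t1_4_6 := congrArg (fun M => Matrix.trace (X 4 * (X 6 * M))) hl1
    simp only [mul_sub, mul_add, mul_neg, mul_zero, Matrix.trace_sub, Matrix.trace_add, Matrix.trace_neg, Matrix.trace_zero] at t1_4_6
    have t1_5_3 := congrArg (fun M => Matrix.trace (X 5 * (X 3 * M))) hl1
    simp only [mul_sub, mul_add, mul_neg, mul_zero, Matrix.trace_sub, Matrix.trace_add, Matrix.trace_neg, Matrix.trace_zero] at t1_5_3
    have t1_6_4 := congrArg (fun M => Matrix.trace (X 6 * (X 4 * M))) hl1
    simp only [mul_sub, mul_add, mul_neg, mul_zero, Matrix.trace_sub, Matrix.trace_add, Matrix.trace_neg, Matrix.trace_zero] at t1_6_4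
    have t2_0_1 := congrArg (fun M => Matrix.trace (X 0 * (X 1 * M))) hl2
    simp only [mul_sub, mul_add, mul_neg, mul_zero, Matrix.trace_sub, Matrix.trace_add, Matrix.trace_neg, Matrix.trace_zero] at t2_0_1
    have t2_1_0 := congrArg (fun M => Matrix.trace (X 1 * (X 0 * M))) hl2
    simp only [mul_sub, mul_add, mul_neg, mul_zero, Matrix.trace_sub, Matrix.trace_add, Matrix.trace_neg, Matrix.trace_zero] at t2_1_0
    have t2_3_6 := congrArg (fun M => Matrix.trace (X 3 * (X 6 * M))) hl2
    simp only [mul_sub, mul_add, mul_neg, mul_zero, Matrix.trace_sub, Matrix.trace_add, Matrix.trace_neg, Matrix.trace_zero] at t2_3_6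
    have t2_4_5 := congrArg (fun M => Matrix.trace (X 4 * (X 5 * M))) hl2
    simp only [mul_sub, mul_add, mul_neg, mul_zero, Matrix.trace_sub, Matrix.trace_add, Matrix.trace_neg, Matrix.trace_zero] at t2_4_5
    have t2_5_4 := congrArg (fun M => Matrix.trace (X 5 * (X 4 * M))) hl2
    simp only [mul_sub, mul_add, mul_neg, mul_zero, Matrix.trace_sub, Matrix.trace_add, Matrix.trace_neg, Matrix.trace_zero] at t2_5_4
    have t2_6_3 := congrArg (fun M => Matrix.trace (X 6 * (X 3 * M))) hl2
    simp only [mul_sub, mul_add, mul_neg, mul_zero, Matrix.trace_sub, Matrix.trace_add, Matrix.trace_neg, Matrix.trace_zero] at t2_6_3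
    have t3_0_4 := congrArg (fun M => Matrix.trace (X 0 * (X 4 * M))) hl3
    simp only [mul_sub, mul_add, mul_neg, mul_zero, Matrix.trace_sub, Matrix.trace_add, Matrix.trace_neg, Matrix.trace_zero] at t3_0_4
    have t3_1_5 := congrArg (fun M => Matrix.trace (X 1 * (X 5 * M))) hl3
    simp only [mul_sub, mul_add, mul_neg, mul_zero, Matrix.trace_sub, Matrix.trace_add, Matrix.trace_neg, Matrix.trace_zero] at t3_1_5
    have t3_2_6 := congrArg (fun M => Matrix.trace (X 2 * (X 6 * M))) hl3
    simp only [mul_sub, mul_add, mul_neg, mul_zero, Matrix.trace_sub, Matrix.trace_add, Matrix.trace_neg, Matrix.trace_zero] at t3_2_6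
    have t3_4_0 := congrArg (fun M => Matrix.trace (X 4 * (X 0 * M))) hl3
    simp only [mul_sub, mul_add, mul_neg, mul_zero, Matrix.trace_sub, Matrix.trace_add, Matrix.trace_neg, Matrix.trace_zero] at t3_4_0
    have t3_5_1 := congrArg (fun M => Matrix.trace (X 5 * (X 1 * M))) hl3
    simp only [mul_sub, mul_add, mul_neg, mul_zero, Matrix.trace_sub, Matrix.trace_add, Matrix.trace_neg, Matrix.trace_zero] at t3_5_1
    have t3_6_2 := congrArg (fun M => Matrix.trace (X 6 * (X 2 * M))) hl3
    simp only [mul_sub, mul_add, mul_neg, mul_zero, Matrix.trace_sub, Matrix.trace_add, Matrix.trace_neg, Matrix.trace_zero] at t3_6_2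
    have t4_0_3 := congrArg (fun M => Matrix.trace (X 0 * (X 3 * M))) hl4
    simp only [mul_sub, mul_add, mul_neg, mul_zero, Matrix.trace_sub, Matrix.trace_add, Matrix.trace_neg, Matrix.trace_zero] at t4_0_3
    have t4_1_6 := congrArg (fun M => Matrix.trace (X 1 * (X 6 * M))) hl4
    simp only [mul_sub, mul_add, mul_neg, mul_zero, Matrix.trace_sub, Matrix.trace_add, Matrix.trace_neg, Matrix.trace_zero] at t4_1_6
    have t4_2_5 := congrArg (fun M => Matrix.trace (X 2 * (X 5 * M))) hl4
    simp only [mul_sub, mul_add, mul_neg, mul_zero, Matrix.trace_sub, Matrix.trace_add, Matrix.trace_neg, Matrix.trace_zero] at t4_2_5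
    have t4_3_0 := congrArg (fun M => Matrix.trace (X 3 * (X 0 * M))) hl4
    simp only [mul_sub, mul_add, mul_neg, mul_zero, Matrix.trace_sub, Matrix.trace_add, Matrix.trace_neg, Matrix.trace_zero] at t4_3_0
    have t4_5_2 := congrArg (fun M => Matrix.trace (X 5 * (X 2 * M))) hl4
    simp only [mul_sub, mul_add, mul_neg, mul_zero, Matrix.trace_sub, Matrix.trace_add, Matrix.trace_neg, Matrix.trace_zero] at t4_5_2
    have t4_6_1 := congrArg (fun M => Matrix.trace (X 6 * (X 1 * M))) hl4
    simp only [mul_sub, mul_add, mul_neg, mul_zero, Matrix.trace_sub, Matrix.trace_add, Matrix.trace_neg, Matrix.trace_zero] at t4_6_1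
    have t5_0_6 := congrArg (fun M => Matrix.trace (X 0 * (X 6 * M))) hl5
    simp only [mul_sub, mul_add, mul_neg, mul_zero, Matrix.trace_sub, Matrix.trace_add, Matrix.trace_neg, Matrix.trace_zero] at t5_0_6
    have t5_1_3 := congrArg (fun M => Matrix.trace (X 1 * (X 3 * M))) hl5
    simp only [mul_sub, mul_add, mul_neg, mul_zero, Matrix.trace_sub, Matrix.trace_add, Matrix.trace_neg, Matrix.trace_zero] at t5_1_3
    have t5_2_4 := congrArg (fun M => Matrix.trace (X 2 * (X 4 * M))) hl5
    simp only [mul_sub, mul_add, mul_neg, mul_zero, Matrix.trace_sub, Matrix.trace_add, Matrix.trace_neg, Matrix.trace_zero] at t5_2_4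
    have t5_3_1 := congrArg (fun M => Matrix.trace (X 3 * (X 1 * M))) hl5
    simp only [mul_sub, mul_add, mul_neg, mul_zero, Matrix.trace_sub, Matrix.trace_add, Matrix.trace_neg, Matrix.trace_zero] at t5_3_1
    have t5_4_2 := congrArg (fun M => Matrix.trace (X 4 * (X 2 * M))) hl5
    simp only [mul_sub, mul_add, mul_neg, mul_zero, Matrix.trace_sub, Matrix.trace_add, Matrix.trace_neg, Matrix.trace_zero] at t5_4_2
    have t5_6_0 := congrArg (fun M => Matrix.trace (X 6 * (X 0 * M))) hl5
    simp only [mul_sub, mul_add, mul_neg, mul_zero, Matrix.trace_sub, Matrix.trace_add, Matrix.trace_neg, Matrix.trace_zero] at t5_6_0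
    have t6_0_5 := congrArg (fun M => Matrix.trace (X 0 * (X 5 * M))) hl6
    simp only [mul_sub, mul_add, mul_neg, mul_zero, Matrix.trace_sub, Matrix.trace_add, Matrix.trace_neg, Matrix.trace_zero] at t6_0_5
    have t6_1_4 := congrArg (fun M => Matrix.trace (X 1 * (X 4 * M))) hl6
    simp only [mul_sub, mul_add, mul_neg, mul_zero, Matrix.trace_sub, Matrix.trace_add, Matrix.trace_neg, Matrix.trace_zero] at t6_1_4
    have t6_2_3 := congrArg (fun M => Matrix.trace (X 2 * (X 3 * M))) hl6
    simp only [mul_sub, mul_add, mul_neg, mul_zero, Matrix.trace_sub, Matrix.trace_add, Matrix.trace_neg, Matrix.trace_zero] at t6_2_3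
    have t6_3_2 := congrArg (fun M => Matrix.trace (X 3 * (X 2 * M))) hl6
    simp only [mul_sub, mul_add, mul_neg, mul_zero, Matrix.trace_sub, Matrix.trace_add, Matrix.trace_neg, Matrix.trace_zero] at t6_3_2
    have t6_4_1 := congrArg (fun M => Matrix.trace (X 4 * (X 1 * M))) hl6
    simp only [mul_sub, mul_add, mul_neg, mul_zero, Matrix.trace_sub, Matrix.trace_add, Matrix.trace_neg, Matrix.trace_zero] at t6_4_1
    have t6_5_0 := congrArg (fun M => Matrix.trace (X 5 * (X 0 * M))) hl6
    simp only [mul_sub, mul_add, mul_neg, mul_zero, Matrix.trace_sub, Matrix.trace_add, Matrix.trace_neg, Matrix.trace_zero] at t6_5_0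
    have K : ∀ a b c d : Fin 7, Matrix.trace (X a * (X b * (X c * X d))) = Matrix.trace (X d * (X a * (X b * X c))) := by
      intro a b c d
      rw [← mul_assoc, ← mul_assoc, Matrix.trace_mul_comm]
      simp [mul_assoc]
    simp only [Fin.sum_univ_seven, sub_mul, mul_sub, mul_assoc, Matrix.trace_sub]
    linear_combination (norm := ring1)
      (2 : ℝ) * t0_1_2 +
      (-2 : ℝ) * t0_2_1 +
      (2 : ℝ) * t0_3_4 +
      (-2 : ℝ) * t0_4_3 +
      (2 : ℝ) * t0_5_6 +
      (-2 : ℝ) * t0_6_5 +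
      (-2 : ℝ) * t1_0_2 +
      (2 : ℝ) * t1_2_0 +
      (2 : ℝ) * t1_3_5 +
      (-2 : ℝ) * t1_4_6 +
      (-2 : ℝ) * t1_5_3 +
      (2 : ℝ) * t1_6_4 +
      (2 : ℝ) * t2_0_1 +
      (-2 : ℝ) * t2_1_0 +
      (-2 : ℝ) * t2_3_6 +
      (-2 : ℝ) * t2_4_5 +
      (2 : ℝ) * t2_5_4 +
      (2 : ℝ) * t2_6_3 +
      (-2 : ℝ) * t3_0_4 +
      (-2 : ℝ) * t3_1_5 +
      (2 : ℝ) * t3_2_6 +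
      (2 : ℝ) * t3_4_0 +
      (2 : ℝ) * t3_5_1 +
      (-2 : ℝ) * t3_6_2 +
      (2 : ℝ) * t4_0_3 +
      (2 : ℝ) * t4_1_6 +
      (2 : ℝ) * t4_2_5 +
      (-2 : ℝ) * t4_3_0 +
      (-2 : ℝ) * t4_5_2 +
      (-2 : ℝ) * t4_6_1 +
      (-2 : ℝ) * t5_0_6 +
      (2 : ℝ) * t5_1_3 +
      (-2 : ℝ) * t5_2_4 +
      (-2 : ℝ) * t5_3_1 +
      (2 : ℝ) * t5_4_2 +
      (2 : ℝ) * t5_6_0 +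
      (2 : ℝ) * t6_0_5 +
      (-2 : ℝ) * t6_1_4 +
      (-2 : ℝ) * t6_2_3 +
      (2 : ℝ) * t6_3_2 +
      (2 : ℝ) * t6_4_1 +
      (-2 : ℝ) * t6_5_0 +
      (2 : ℝ) * K 2 1 3 4 +
      (-2 : ℝ) * K 2 1 4 3 +
      (2 : ℝ) * K 2 1 5 6 +
      (-2 : ℝ) * K 2 1 6 5 +
      (-2 : ℝ) * K 3 4 1 2 +
      (2 : ℝ) * K 3 4 2 1 +
      (2 : ℝ) * K 4 3 1 2 +
      (-2 : ℝ) * K 4 3 2 1 +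
      (2 : ℝ) * K 4 3 5 6 +
      (-2 : ℝ) * K 4 3 6 5 +
      (-2 : ℝ) * K 5 6 1 2 +
      (2 : ℝ) * K 5 6 2 1 +
      (-2 : ℝ) * K 5 6 3 4 +
      (2 : ℝ) * K 5 6 4 3 +
      (2 : ℝ) * K 6 5 1 2 +
      (-2 : ℝ) * K 6 5 2 1 +
      (2 : ℝ) * K 6 5 3 4 +
      (-2 : ℝ) * K 6 5 4 3 +
      (-2 : ℝ) * K 2 0 3 5 +
      (2 : ℝ) * K 2 0 4 6 +
      (2 : ℝ) * K 2 0 5 3 +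
      (-2 : ℝ) * K 2 0 6 4 +
      (2 : ℝ) * K 3 5 0 2 +
      (-2 : ℝ) * K 3 5 2 0 +
      (-2 : ℝ) * K 4 6 0 2 +
      (2 : ℝ) * K 4 6 2 0 +
      (2 : ℝ) * K 4 6 3 5 +
      (-2 : ℝ) * K 5 3 0 2 +
      (2 : ℝ) * K 5 3 2 0 +
      (-2 : ℝ) * K 5 3 4 6 +
      (2 : ℝ) * K 5 3 6 4 +
      (2 : ℝ) * K 6 4 0 2 +
      (-2 : ℝ) * K 6 4 2 0 +
      (2 : ℝ) * K 6 4 5 3 +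
      (-2 : ℝ) * K 1 0 3 6 +
      (-2 : ℝ) * K 1 0 4 5 +
      (2 : ℝ) * K 1 0 5 4 +
      (2 : ℝ) * K 1 0 6 3 +
      (2 : ℝ) * K 3 6 0 1 +
      (-2 : ℝ) * K 3 6 1 0 +
      (2 : ℝ) * K 4 5 0 1 +
      (-2 : ℝ) * K 4 5 1 0 +
      (-2 : ℝ) * K 5 4 0 1 +
      (2 : ℝ) * K 5 4 1 0 +
      (-2 : ℝ) * K 6 3 0 1 +
      (2 : ℝ) * K 6 3 1 0 +
      (2 : ℝ) * K 6 3 4 5 +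
      (-2 : ℝ) * K 6 3 5 4 +
      (-2 : ℝ) * K 1 5 0 4 +
      (2 : ℝ) * K 2 6 0 4 +
      (2 : ℝ) * K 2 6 1 5 +
      (2 : ℝ) * K 4 0 1 5 +
      (-2 : ℝ) * K 4 0 2 6 +
      (-2 : ℝ) * K 4 0 5 1 +
      (2 : ℝ) * K 4 0 6 2 +
      (-2 : ℝ) * K 5 1 2 6 +
      (-2 : ℝ) * K 5 1 4 0 +
      (2 : ℝ) * K 5 1 6 2 +
      (2 : ℝ) * K 6 2 4 0 +
      (2 : ℝ) * K 6 2 5 1 +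
      (-2 : ℝ) * K 1 6 0 3 +
      (-2 : ℝ) * K 2 5 0 3 +
      (2 : ℝ) * K 3 0 1 6 +
      (2 : ℝ) * K 3 0 2 5 +
      (-2 : ℝ) * K 3 0 5 2 +
      (-2 : ℝ) * K 3 0 6 1 +
      (-2 : ℝ) * K 5 2 3 0 +
      (2 : ℝ) * K 6 1 2 5 +
      (-2 : ℝ) * K 6 1 3 0 +
      (-2 : ℝ) * K 6 1 5 2 +
      (2 : ℝ) * K 2 4 1 3 +
      (-2 : ℝ) * K 3 1 2 4 +
      (2 : ℝ) * K 3 1 4 2 +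
      (2 : ℝ) * K 4 2 3 1 +
      (-2 : ℝ) * K 6 0 1 3 +
      (2 : ℝ) * K 6 0 2 4 +
      (2 : ℝ) * K 6 0 3 1 +
      (-2 : ℝ) * K 6 0 4 2 +
      (2 : ℝ) * K 4 1 2 3 +
      (-2 : ℝ) * K 4 1 3 2 +
      (-2 : ℝ) * K 5 0 1 4 +
      (-2 : ℝ) * K 5 0 2 3 +
      (2 : ℝ) * K 5 0 3 2 +
      (2 : ℝ) * K 5 0 4 1 +
      (-2 : ℝ) * K 6 5 3 4 +
      (2 : ℝ) * K 5 6 3 4 +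
      (-2 : ℝ) * K 4 6 3 5 +
      (2 : ℝ) * K 5 4 0 1 +
      (-2 : ℝ) * K 6 4 0 2 +
      (-2 : ℝ) * K 6 5 1 2 +
      (2 : ℝ) * K 6 3 0 1 +
      (2 : ℝ) * K 5 3 0 2 +
      (2 : ℝ) * K 5 6 1 2 +
      (-2 : ℝ) * K 2 6 1 5 +
      (-2 : ℝ) * K 4 3 1 2 +
      (-2 : ℝ) * K 3 6 0 1 +
      (2 : ℝ) * K 4 6 0 2 +
      (2 : ℝ) * K 1 6 0 3 +
      (-2 : ℝ) * K 2 6 0 4 +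
      (2 : ℝ) * K 3 4 1 2 +
      (-2 : ℝ) * K 2 4 1 3 +
      (-2 : ℝ) * K 4 5 0 1 +
      (-2 : ℝ) * K 3 5 0 2 +
      (2 : ℝ) * K 2 5 0 3 +
      (2 : ℝ) * K 1 5 0 4 +
      (-2 : ℝ) * K 4 6 5 3 +
      (2 : ℝ) * K 4 5 6 3 +
      (-2 : ℝ) * K 5 4 6 3 +
      (2 : ℝ) * K 1 5 4 0 +
      (-2 : ℝ) * K 2 6 4 0 +
      (-2 : ℝ) * K 2 6 5 1 +
      (2 : ℝ) * K 1 6 3 0 +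
      (2 : ℝ) * K 2 5 3 0 +
      (2 : ℝ) * K 2 5 6 1 +
      (-2 : ℝ) * K 5 2 6 1 +
      (-2 : ℝ) * K 2 4 3 1 +
      (-2 : ℝ) * K 1 3 6 0 +
      (2 : ℝ) * K 2 4 6 0 +
      (2 : ℝ) * K 3 1 6 0 +
      (-2 : ℝ) * K 4 2 6 0 +
      (2 : ℝ) * K 2 3 4 1 +
      (-2 : ℝ) * K 3 2 4 1 +
      (-2 : ℝ) * K 1 4 5 0 +
      (-2 : ℝ) * K 2 3 5 0 +
      (2 : ℝ) * K 3 2 5 0 +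
      (2 : ℝ) * K 4 1 5 0
  have hT : ∀ p q : Fin 7, Matrix.transpose (X p * X q - X q * X p)
      = -(X p * X q - X q * X p) := by
    intro p q
    simp [Matrix.transpose_sub, Matrix.transpose_mul, hskew, neg_sub]
  have hnn : ∀ p q : Fin 7,
      0 ≤ Matrix.trace (Matrix.transpose (X p * X q - X q * X p) * (X p * X q - X q * X p)) :=
    fun p q => auxTraceNonneg n _
  have hsum : ∑ p : Fin 7, ∑ q : Fin 7,
      Matrix.trace (Matrix.transpose (X p * X q - X q * X p) * (X p * X q - X q * X p)) = 0 := by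
    have e : ∀ p q : Fin 7,
        Matrix.trace (Matrix.transpose (X p * X q - X q * X p) * (X p * X q - X q * X p))
        = -Matrix.trace ((X p * X q - X q * X p) * (X p * X q - X q * X p)) := by
      intro p q
      rw [hT, neg_mul, Matrix.trace_neg]
    simp only [e, Finset.sum_neg_distrib, hzero, neg_zero]
  have hout := (Finset.sum_eq_zero_iff_of_nonneg
    (fun p _ => Finset.sum_nonneg fun q _ => hnn p q)).mp hsum
  intro p q
  have hinner := (Finset.sum_eq_zero_iff_of_nonneg (fun q _ => hnn p q)).mp
    (hout p (Finset.mem_univ p)) q (Finset.mem_univ q)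
  exact sub_eq_zero.mp (auxTraceZero n _ hinner)
end

section
/- Let k be a field and let (a_1,…,a_7), (b_1,…,b_7) ∈ k^7. Set u := Σ_{i=1}^7 b_i o_i and v := Σ_{i=1}^7 a_i o_i in Im O_k. Then the seven quadratic equations Σ_{i,j=1}^7 ε^{ℓij} b_i a_j = 0 (ℓ = 1,…,7) hold if and only if Im(vu) = 0, if and only if Im(uv) = 0. (These seven equations are exactly the relations of the quiver Q whose representations of dimension vector (1,1,1) are parametrized by such pairs; hence the moduli of indecomposable (1,1,1)-representations is the locus {([u],[v]) ∈ ℙ⁶×ℙ⁶ : Im(uv) = 0}.) -/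
/-- The octonion algebra `O_k`: the vector space `k ⊕ k^7` with basis `1, o_1, …, o_7`.
An element is a pair (real part, vector of coefficients of `o_1,…,o_7`). -/
def Oct (k : Type) [Field k] : Type := k × (Fin 7 → k)

namespace Oct

variable {k : Type} [Field k]

instance : AddCommGroup (Oct k) := inferInstanceAs (AddCommGroup (k × (Fin 7 → k)))
instance : Module k (Oct k) := inferInstanceAs (Module k (k × (Fin 7 → k)))

/-- The coefficient of `1` in an octonion. -/
def re (u : Oct k) : k := Prod.fst u

/-- The coefficients of `o_1, …, o_7` in an octonion. -/
def im (u : Oct k) : Fin 7 → k := Prod.snd u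

/-- The unit `1` of `O_k`. -/
instance : One (Oct k) := ⟨((1 : k), 0)⟩

/-- Octonion multiplication, determined by `o_r o_s = Σ_i ε^{rsi} o_i − δ_{rs}·1`
together with `1` being a two-sided unit. -/
instance : Mul (Oct k) :=
  ⟨fun u v =>
    (re u * re v - ∑ i : Fin 7, im u i * im v i,
     fun i => re u * im v i + re v * im u i +
       ∑ r : Fin 7, ∑ s : Fin 7, ((eps r s i : ℤ) : k) * im u r * im v s)⟩

/-- The imaginary basis octonions `o_1, …, o_7`. -/
def oc (i : Fin 7) : Oct k := ((0 : k), Pi.single i 1)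

/-- Conjugation on `O_k`: fixes `1` and negates each `o_i`. -/
def conj (u : Oct k) : Oct k := (re u, -im u)

/-- The purely imaginary part `Im(u) = (u - ū)/2` of an octonion. -/
def imPart (u : Oct k) : Oct k := ((0 : k), im u)

/-- The symmetric bilinear form `⟨u, v⟩ = Re(u·v̄)` on `O_k`. -/
def form (u v : Oct k) : k := re (u * conj v)

/-- The subspace `Im O_k` of purely imaginary octonions (the span of `o_1, …, o_7`). -/
def ImO (k : Type) [Field k] : Submodule k (Oct k) where
  carrier := {u | re u = 0}
  add_mem' := by
    intro a b ha hb
    simp only [Set.mem_setOf_eq] at *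
    show re a + re b = 0
    rw [ha, hb, add_zero]
  zero_mem' := rfl
  smul_mem' := by
    intro c a ha
    simp only [Set.mem_setOf_eq] at *
    show c * re a = 0
    rw [ha, mul_zero]

end Oct

open Oct

/-! For imaginary `x, y` the imaginary part of `x y` is the seven-dimensional cross product of
their coefficient vectors, so the seven relations say exactly `u × v = 0`; total antisymmetry
of `ε` gives `Im(v u) = -Im(u v)`. -/

namespace Oct

variable {k : Type} [Field k]

lemma eps_cycle : ∀ i j l : Fin 7, eps i j l = eps j l i := by decide

lemma eps_swap_last : ∀ l i j : Fin 7, eps l j i = -eps l i j := by decide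

def cross (x y : Fin 7 → k) : Fin 7 → k :=
  fun l => ∑ i : Fin 7, ∑ j : Fin 7, ((eps l i j : ℤ) : k) * x i * y j

lemma cross_swap (x y : Fin 7 → k) : cross y x = -cross x y := by
  funext l
  simp only [cross, Pi.neg_apply, ← Finset.sum_neg_distrib]
  rw [Finset.sum_comm]
  refine Finset.sum_congr rfl fun i _ => Finset.sum_congr rfl fun j _ => ?_
  rw [eps_swap_last]
  push_cast
  ring

lemma mem_ImO_iff {w : Oct k} : w ∈ ImO k ↔ re w = 0 := Iff.rfl

lemma im_mul_of_mem_ImO {x y : Oct k} (hx : x ∈ ImO k) (hy : y ∈ ImO k) :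
    im (x * y) = cross (im x) (im y) := by
  funext l
  change re x * im y l + re y * im x l +
    ∑ r : Fin 7, ∑ s : Fin 7, ((eps r s l : ℤ) : k) * im x r * im y s = _
  rw [mem_ImO_iff.mp hx, mem_ImO_iff.mp hy]
  simp only [cross, zero_mul, add_zero, zero_add, ← eps_cycle]

lemma imPart_eq_zero_iff {w : Oct k} : imPart w = 0 ↔ im w = 0 := by
  change ((0 : k), im w) = ((0 : k), (0 : Fin 7 → k)) ↔ _
  simp

lemma imPart_mul_swap_eq_zero_iff {x y : Oct k} (hx : x ∈ ImO k) (hy : y ∈ ImO k) :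
    imPart (y * x) = 0 ↔ imPart (x * y) = 0 := by
  rw [imPart_eq_zero_iff, imPart_eq_zero_iff, im_mul_of_mem_ImO hy hx,
    im_mul_of_mem_ImO hx hy, cross_swap, neg_eq_zero]

lemma oc_mem_ImO (i : Fin 7) : (oc i : Oct k) ∈ ImO k := rfl

lemma sum_smul_oc_mem_ImO (c : Fin 7 → k) : ∑ i : Fin 7, c i • (oc i : Oct k) ∈ ImO k :=
  Submodule.sum_mem _ fun i _ => Submodule.smul_mem _ _ (oc_mem_ImO i)

lemma im_sum_smul_oc (c : Fin 7 → k) : im (∑ i : Fin 7, c i • (oc i : Oct k)) = c := by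
  have h_single : ∀ i, im (c i • (oc i : Oct k)) = Pi.single i (c i) := fun i => by
    funext j
    change c i * (Pi.single i (1 : k) : Fin 7 → k) j = _
    simp [Pi.single_apply]
  have h_sum : im (∑ i : Fin 7, c i • (oc i : Oct k)) = ∑ i : Fin 7, im (c i • (oc i : Oct k)) :=
    Prod.snd_sum
  rw [h_sum, Finset.sum_congr rfl fun i _ => h_single i, Finset.univ_sum_single]

end Oct

/-- STATEMENT 19: for `u = Σ b_i o_i` and `v = Σ a_i o_i` in `Im O_k`, the seven quadratic
relations `Σ_{i,j} ε^{ℓij} b_i a_j = 0` (the relations of the quiver `Q` on representations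
of dimension vector `(1,1,1)`) hold if and only if `Im(vu) = 0`, if and only if
`Im(uv) = 0`. -/
theorem Oct.moduli_one_one_one (k : Type) [Field k] (a b : Fin 7 → k)
    (u v : Oct k)
    (hu : u = ∑ i : Fin 7, b i • oc i) (hv : v = ∑ i : Fin 7, a i • oc i) :
    ((∀ ℓ : Fin 7, ∑ i : Fin 7, ∑ j : Fin 7, ((eps ℓ i j : ℤ) : k) * b i * a j = 0) ↔
        imPart (v * u) = 0) ∧
      (imPart (v * u) = 0 ↔ imPart (u * v) = 0) := by
  have hu_mem : u ∈ ImO k := hu ▸ sum_smul_oc_mem_ImO b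
  have hv_mem : v ∈ ImO k := hv ▸ sum_smul_oc_mem_ImO a
  have h_uv : imPart (u * v) = 0 ↔ cross b a = 0 := by
    rw [imPart_eq_zero_iff, im_mul_of_mem_ImO hu_mem hv_mem, hu, hv, im_sum_smul_oc,
      im_sum_smul_oc]
  have h_relations : (∀ ℓ : Fin 7, ∑ i : Fin 7, ∑ j : Fin 7, ((eps ℓ i j : ℤ) : k) * b i * a j = 0)
      ↔ cross b a = 0 :=
    funext_iff.symm
  have h_swap := imPart_mul_swap_eq_zero_iff hu_mem hv_mem
  exact ⟨h_relations.trans (h_uv.symm.trans h_swap.symm), h_swap⟩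
end
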